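/- arXiv:2509.22821 — 9 statements merged into one kernel-verified Lean document; each statement's English description precedes it below -/
import Mathlib

section
/- Let (X, p) be a pointed proper metric space and let Iso(X) be its group of isometries (bijective distance-preserving maps X → X). Define d_p(g, h) := inf_{r > 0} ( 1/r + sup_{x ∈ B_r(p)} d(g x, h x) ). Then: (1) d_p is a metric on Iso(X); (2) d_p is left-invariant, i.e. d_p(k g, k h) = d_p(g, h) for all g, h, k ∈ Iso(X); (3) (Iso(X), d_p) is a proper metric space, i.e. every sequence (g_j) in Iso(X) with sup_j d_p(g_j, id) < ∞ has a subsequence converging in d_p to an isometry of X. -/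
open Metric Filter Topology

/-- The metric `d_p` on the isometry group of a pointed metric space:
`d_p(g,h) = inf_{r > 0} ( 1/r + sup_{x ∈ B_r(p)} d(g x, h x) )`. -/
noncomputable def isoDist {X : Type*} [MetricSpace X] (p : X) (g h : X ≃ᵢ X) : ℝ :=
  ⨅ r : Set.Ioi (0 : ℝ),
    (1 / (r : ℝ) + ⨆ x : Metric.ball p (r : ℝ), dist (g (x : X)) (h (x : X)))

section Aux

variable {X : Type*} [MetricSpace X]

/-- Auxiliary: the sup part of `isoDist`. -/
noncomputable def isoSup (p : X) (r : ℝ) (g h : X ≃ᵢ X) : ℝ :=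
  ⨆ x : Metric.ball p r, dist (g (x : X)) (h (x : X))

lemma isoSup_bddAbove (p : X) (r : ℝ) (g h : X ≃ᵢ X) :
    BddAbove (Set.range fun x : Metric.ball p r => dist (g (x : X)) (h (x : X))) := by
  refine ⟨2 * r + dist (g p) (h p), ?_⟩
  rintro _ ⟨⟨x, hx⟩, rfl⟩
  have hx' : dist x p < r := mem_ball.1 hx
  have h1 : dist (g x) (h x) ≤ dist (g x) (g p) + dist (g p) (h p) + dist (h p) (h x) :=
    dist_triangle4 _ _ _ _
  rw [g.dist_eq, h.dist_eq] at h1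
  have := dist_nonneg (x := x) (y := p)
  rw [dist_comm p x] at h1
  nlinarith [dist_nonneg (x := g p) (y := h p)]

lemma isoSup_nonneg (p : X) (r : ℝ) (g h : X ≃ᵢ X) : 0 ≤ isoSup p r g h :=
  Real.iSup_nonneg fun _ => dist_nonneg

lemma le_isoSup (p : X) {r : ℝ} (g h : X ≃ᵢ X) {x : X} (hx : x ∈ Metric.ball p r) :
    dist (g x) (h x) ≤ isoSup p r g h :=
  le_ciSup (isoSup_bddAbove p r g h) (⟨x, hx⟩ : Metric.ball p r)

lemma isoSup_le (p : X) {r : ℝ} (hr : 0 < r) (g h : X ≃ᵢ X) {a : ℝ}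
    (ha : ∀ x ∈ Metric.ball p r, dist (g x) (h x) ≤ a) : isoSup p r g h ≤ a := by
  haveI : Nonempty (Metric.ball p r : Set X) := (Metric.nonempty_ball.2 hr).to_subtype
  exact ciSup_le fun x => ha x x.2

lemma isoSup_mono (p : X) {r r' : ℝ} (hr : 0 < r) (hrr' : r ≤ r') (g h : X ≃ᵢ X) :
    isoSup p r g h ≤ isoSup p r' g h :=
  isoSup_le p hr g h fun x hx => le_isoSup p g h (Metric.ball_subset_ball hrr' hx)

lemma isoDist_eq (p : X) (g h : X ≃ᵢ X) :
    isoDist p g h = ⨅ r : Set.Ioi (0 : ℝ), (1 / (r : ℝ) + isoSup p r g h) := rfl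

instance : Nonempty (Set.Ioi (0 : ℝ)) := ⟨⟨1, by norm_num⟩⟩

lemma isoDist_bddBelow (p : X) (g h : X ≃ᵢ X) :
    BddBelow (Set.range fun r : Set.Ioi (0 : ℝ) => 1 / (r : ℝ) + isoSup p r g h) := by
  refine ⟨0, ?_⟩
  rintro _ ⟨r, rfl⟩
  have hr : (0:ℝ) < r := r.2
  exact add_nonneg (by positivity) (isoSup_nonneg p r g h)

lemma isoDist_nonneg (p : X) (g h : X ≃ᵢ X) : 0 ≤ isoDist p g h :=
  le_ciInf fun r => add_nonneg (by have hr : (0:ℝ) < r := r.2; positivity) (isoSup_nonneg p r g h)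

lemma isoDist_le (p : X) {r : ℝ} (hr : 0 < r) (g h : X ≃ᵢ X) :
    isoDist p g h ≤ 1 / r + isoSup p r g h :=
  ciInf_le (isoDist_bddBelow p g h) (⟨r, hr⟩ : Set.Ioi (0 : ℝ))

lemma isoDist_exists_lt (p : X) {g h : X ≃ᵢ X} {a : ℝ} (ha : isoDist p g h < a) :
    ∃ r : ℝ, 0 < r ∧ 1 / r + isoSup p r g h < a := by
  obtain ⟨r, hr⟩ := exists_lt_of_ciInf_lt ha
  exact ⟨r, r.2, hr⟩

end Aux

section Aux2

variable {X : Type*} [MetricSpace X]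

lemma isoDist_symm (p : X) (g h : X ≃ᵢ X) : isoDist p g h = isoDist p h g := by
  unfold isoDist
  refine congrArg _ (funext fun r => ?_)
  refine congrArg _ (congrArg _ (funext fun x => ?_))
  exact dist_comm _ _

lemma isoDist_triangle (p : X) (g h k : X ≃ᵢ X) :
    isoDist p g k ≤ isoDist p g h + isoDist p h k := by
  refine le_of_forall_pos_le_add fun ε hε => ?_
  obtain ⟨r₁, hr₁, h₁⟩ := isoDist_exists_lt p (lt_add_of_pos_right (isoDist p g h) (by linarith : (0:ℝ) < ε/2))
  obtain ⟨r₂, hr₂, h₂⟩ := isoDist_exists_lt p (lt_add_of_pos_right (isoDist p h k) (by linarith : (0:ℝ) < ε/2))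
  set r := min r₁ r₂ with hrdef
  have hr : 0 < r := lt_min hr₁ hr₂
  have key : isoDist p g k ≤ 1 / r + isoSup p r g k := isoDist_le p hr g k
  have hsum : isoSup p r g k ≤ isoSup p r g h + isoSup p r h k :=
    isoSup_le p hr g k fun x hx =>
      (dist_triangle (g x) (h x) (k x)).trans
        (add_le_add (le_isoSup p g h hx) (le_isoSup p h k hx))
  have hm1 : isoSup p r g h ≤ isoSup p r₁ g h := isoSup_mono p hr (min_le_left _ _) g h
  have hm2 : isoSup p r h k ≤ isoSup p r₂ h k := isoSup_mono p hr (min_le_right _ _) h k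
  have hinv : 1 / r ≤ 1 / r₁ + 1 / r₂ := by
    have p1 : (0:ℝ) < 1 / r₁ := one_div_pos.2 hr₁
    have p2 : (0:ℝ) < 1 / r₂ := one_div_pos.2 hr₂
    rcases min_cases r₁ r₂ with ⟨he, _⟩ | ⟨he, _⟩ <;> rw [hrdef, he] <;> linarith
  linarith

lemma isoDist_self (p : X) (g : X ≃ᵢ X) : isoDist p g g = 0 := by
  refine le_antisymm (le_of_forall_pos_le_add fun ε hε => ?_) (isoDist_nonneg p g g)
  have hε' : 0 < 1 / ε := by positivity
  have h0 : isoSup p (1/ε) g g = 0 := by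
    haveI : Nonempty (Metric.ball p (1/ε) : Set X) := (Metric.nonempty_ball.2 hε').to_subtype
    simp [isoSup]
  have := isoDist_le p hε' g g
  rw [h0, one_div_one_div] at this
  linarith

lemma isoDist_eq_zero_iff (p : X) (g h : X ≃ᵢ X) : isoDist p g h = 0 ↔ g = h := by
  constructor
  · intro h0
    refine IsometryEquiv.ext fun x => ?_
    have hd : dist (g x) (h x) ≤ 0 := by
      refine le_of_forall_pos_le_add fun ε hε => ?_
      obtain ⟨D, hD⟩ : ∃ D : ℝ, D = dist x p + 1 := ⟨_, rfl⟩
      have hd1 : (0:ℝ) < D := by rw [hD]; positivity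
      set ε' := min ε (1 / D) with hε'def
      have hε' : 0 < ε' := lt_min hε (by positivity)
      obtain ⟨r, hr, hlt⟩ := isoDist_exists_lt p (show isoDist p g h < ε' by rw [h0]; exact hε')
      have hsup := isoSup_nonneg p r g h
      have h1ra : 1 / r < ε' := lt_of_le_of_lt (le_add_of_nonneg_right hsup) hlt
      have h1r : 1 / r < 1 / D := h1ra.trans_le (min_le_right _ _)
      have hrx : D < r := (one_div_lt_one_div hr hd1).1 h1r
      have hx : x ∈ Metric.ball p r := mem_ball.2 (by rw [hD] at hrx; linarith)
      have h2 : dist (g x) (h x) ≤ isoSup p r g h := le_isoSup p g h hx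
      have h1rpos : 0 < 1 / r := by positivity
      have h3 : dist (g x) (h x) < ε' := by
        refine lt_of_le_of_lt h2 (lt_of_le_of_lt ?_ hlt)
        linarith
      have h4 : dist (g x) (h x) < ε := lt_of_lt_of_le h3 (min_le_left _ _)
      linarith
    exact dist_le_zero.1 hd
  · rintro rfl; exact isoDist_self p g

lemma isoDist_left_inv (p : X) (k g h : X ≃ᵢ X) :
    isoDist p (k * g) (k * h) = isoDist p g h := by
  unfold isoDist
  refine congrArg _ (funext fun r => ?_)
  refine congrArg _ (congrArg _ (funext fun x => ?_))
  simp [k.dist_eq]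

end Aux2

section Proper

variable {X : Type*} [MetricSpace X] [ProperSpace X]

lemma isoDist_proper (p : X) (gseq : ℕ → X ≃ᵢ X) (C : ℝ)
    (hC : ∀ j, isoDist p (gseq j) 1 ≤ C) :
    ∃ σ : ℕ → ℕ, StrictMono σ ∧ ∃ g : X ≃ᵢ X,
      Tendsto (fun j => isoDist p (gseq (σ j)) g) atTop (𝓝 0) := by
  -- Step A: pointwise bounds
  have hbp : ∀ j, dist (gseq j p) p ≤ C + 1 := by
    intro j
    obtain ⟨r, hr, hlt⟩ := isoDist_exists_lt p ((hC j).trans_lt (lt_add_one C))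
    have h1 : dist (gseq j p) ((1 : X ≃ᵢ X) p) ≤ isoSup p r (gseq j) 1 :=
      le_isoSup p _ _ (mem_ball_self hr)
    have h1rpos : 0 < 1 / r := by positivity
    simp only [IsometryEquiv.coe_one, id_eq] at h1
    linarith
  have hbx : ∀ j (x : X), dist (gseq j x) x ≤ 2 * dist x p + (C + 1) := by
    intro j x
    calc dist (gseq j x) x
        ≤ dist (gseq j x) (gseq j p) + dist (gseq j p) p + dist p x := dist_triangle4 _ _ _ _
      _ = dist x p + dist (gseq j p) p + dist x p := by
          rw [(gseq j).dist_eq, dist_comm p x]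
      _ ≤ 2 * dist x p + (C + 1) := by linarith [hbp j]
  have hbx' : ∀ j (x : X), dist ((gseq j).symm x) x ≤ 2 * dist x p + (C + 1) := by
    intro j x
    have h1 : dist ((gseq j).symm x) x = dist (gseq j x) x := by
      conv_lhs => rw [← (gseq j).dist_eq, (gseq j).apply_symm_apply, dist_comm]
    rw [h1]; exact hbx j x
  -- Step B: dense sequence
  haveI : Nonempty X := ⟨p⟩
  set D := TopologicalSpace.denseSeq X with hDdef
  have hD : DenseRange D := TopologicalSpace.denseRange_denseSeq X
  -- Step C: subsequence converging pointwise on the dense set, via compactness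
  set R : ℕ → ℝ := fun i => 3 * dist (D i) p + (C + 1) with hR
  set T : Set (ℕ → X × X) :=
    Set.univ.pi fun i => closedBall p (R i) ×ˢ closedBall p (R i) with hT
  have hTc : IsCompact T :=
    isCompact_univ_pi fun i => (isCompact_closedBall _ _).prod (isCompact_closedBall _ _)
  set F : ℕ → ℕ → X × X := fun j i => (gseq j (D i), (gseq j).symm (D i)) with hFdef
  have hFT : ∀ j, F j ∈ T := by
    intro j
    rw [Set.mem_univ_pi]
    intro i
    constructor
    · rw [mem_closedBall]
      calc dist (gseq j (D i)) p ≤ dist (gseq j (D i)) (D i) + dist (D i) p := dist_triangle _ _ _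
        _ ≤ 2 * dist (D i) p + (C + 1) + dist (D i) p := by linarith [hbx j (D i)]
        _ ≤ R i := by rw [hR]; ring_nf; linarith
    · rw [mem_closedBall]
      calc dist ((gseq j).symm (D i)) p
          ≤ dist ((gseq j).symm (D i)) (D i) + dist (D i) p := dist_triangle _ _ _
        _ ≤ 2 * dist (D i) p + (C + 1) + dist (D i) p := by linarith [hbx' j (D i)]
        _ ≤ R i := by rw [hR]; ring_nf; linarith
  obtain ⟨f, -, σ, hσ, hconv⟩ := hTc.tendsto_subseq hFT
  have hc1 : ∀ i, Tendsto (fun j => gseq (σ j) (D i)) atTop (𝓝 (f i).1) := fun i =>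
    (continuous_fst.tendsto (f i)).comp ((tendsto_pi_nhds.1 hconv) i)
  have hc2 : ∀ i, Tendsto (fun j => (gseq (σ j)).symm (D i)) atTop (𝓝 (f i).2) := fun i =>
    (continuous_snd.tendsto (f i)).comp ((tendsto_pi_nhds.1 hconv) i)
  -- Step D: pointwise convergence everywhere, by equicontinuity + density + completeness
  have hCauchy : ∀ x : X, CauchySeq fun j => gseq (σ j) x := by
    intro x
    rw [Metric.cauchySeq_iff]
    intro ε hε
    obtain ⟨i, hi⟩ := Metric.denseRange_iff.1 hD x (ε / 4) (by linarith)
    obtain ⟨N, hN⟩ := Metric.cauchySeq_iff.1 (hc1 i).cauchySeq (ε / 2) (by linarith)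
    refine ⟨N, fun m hm n hn => ?_⟩
    have key := dist_triangle4 (gseq (σ m) x) (gseq (σ m) (D i)) (gseq (σ n) (D i)) (gseq (σ n) x)
    rw [(gseq (σ m)).dist_eq, (gseq (σ n)).dist_eq, dist_comm (D i) x] at key
    have := hN m hm n hn
    linarith
  have hCauchy' : ∀ x : X, CauchySeq fun j => (gseq (σ j)).symm x := by
    intro x
    rw [Metric.cauchySeq_iff]
    intro ε hε
    obtain ⟨i, hi⟩ := Metric.denseRange_iff.1 hD x (ε / 4) (by linarith)
    obtain ⟨N, hN⟩ := Metric.cauchySeq_iff.1 (hc2 i).cauchySeq (ε / 2) (by linarith)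
    refine ⟨N, fun m hm n hn => ?_⟩
    have key := dist_triangle4 ((gseq (σ m)).symm x) ((gseq (σ m)).symm (D i))
      ((gseq (σ n)).symm (D i)) ((gseq (σ n)).symm x)
    rw [(gseq (σ m)).symm.dist_eq, (gseq (σ n)).symm.dist_eq, dist_comm (D i) x] at key
    have := hN m hm n hn
    linarith
  choose G hG using fun x : X => cauchySeq_tendsto_of_complete (hCauchy x)
  choose Gi hGi using fun x : X => cauchySeq_tendsto_of_complete (hCauchy' x)
  -- Step E: the limit is an isometry equivalence
  have hGdist : ∀ x y : X, dist (G x) (G y) = dist x y := by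
    intro x y
    have h1 : Tendsto (fun j => dist (gseq (σ j) x) (gseq (σ j) y)) atTop
        (𝓝 (dist (G x) (G y))) := (hG x).dist (hG y)
    have h2 : (fun j => dist (gseq (σ j) x) (gseq (σ j) y)) = fun _ => dist x y :=
      funext fun j => (gseq (σ j)).dist_eq x y
    rw [h2] at h1
    exact tendsto_nhds_unique h1 tendsto_const_nhds
  have hli : ∀ x : X, Gi (G x) = x := by
    intro x
    have t1 : Tendsto (fun j => dist (gseq (σ j) x) (G x)) atTop (𝓝 0) :=
      tendsto_iff_dist_tendsto_zero.1 (hG x)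
    have t2 : Tendsto (fun j => dist ((gseq (σ j)).symm (G x)) (Gi (G x))) atTop (𝓝 0) :=
      tendsto_iff_dist_tendsto_zero.1 (hGi (G x))
    have t3 := t1.add t2
    rw [add_zero] at t3
    have hle : ∀ j, dist x (Gi (G x)) ≤
        dist (gseq (σ j) x) (G x) + dist ((gseq (σ j)).symm (G x)) (Gi (G x)) := by
      intro j
      have h4 := dist_triangle x ((gseq (σ j)).symm (G x)) (Gi (G x))
      have h5 : dist x ((gseq (σ j)).symm (G x)) = dist (gseq (σ j) x) (G x) := by
        rw [← (gseq (σ j)).symm.dist_eq (gseq (σ j) x) (G x), (gseq (σ j)).symm_apply_apply]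
      rw [h5] at h4; exact h4
    have h6 : dist x (Gi (G x)) ≤ 0 := ge_of_tendsto t3 (Eventually.of_forall hle)
    exact (dist_le_zero.1 h6).symm
  have hri : ∀ x : X, G (Gi x) = x := by
    intro x
    have t1 : Tendsto (fun j => dist ((gseq (σ j)).symm x) (Gi x)) atTop (𝓝 0) :=
      tendsto_iff_dist_tendsto_zero.1 (hGi x)
    have t2 : Tendsto (fun j => dist (gseq (σ j) (Gi x)) (G (Gi x))) atTop (𝓝 0) :=
      tendsto_iff_dist_tendsto_zero.1 (hG (Gi x))
    have t3 := t1.add t2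
    rw [add_zero] at t3
    have hle : ∀ j, dist x (G (Gi x)) ≤
        dist ((gseq (σ j)).symm x) (Gi x) + dist (gseq (σ j) (Gi x)) (G (Gi x)) := by
      intro j
      have h4 := dist_triangle x (gseq (σ j) (Gi x)) (G (Gi x))
      have h5 : dist x (gseq (σ j) (Gi x)) = dist ((gseq (σ j)).symm x) (Gi x) := by
        rw [← (gseq (σ j)).dist_eq ((gseq (σ j)).symm x) (Gi x), (gseq (σ j)).apply_symm_apply]
      rw [h5] at h4; exact h4
    have h6 : dist x (G (Gi x)) ≤ 0 := ge_of_tendsto t3 (Eventually.of_forall hle)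
    exact (dist_le_zero.1 h6).symm
  set g : X ≃ᵢ X := ⟨⟨G, Gi, hli, hri⟩, Isometry.of_dist_eq hGdist⟩ with hgdef
  have hg_apply : ∀ x : X, g x = G x := fun _ => rfl
  refine ⟨σ, hσ, g, ?_⟩
  -- Step F: convergence in `isoDist`
  rw [Metric.tendsto_nhds]
  intro ε hε
  set r : ℝ := 2 / ε + 1 with hrdef
  have h2ε : (0:ℝ) < 2 / ε := by positivity
  have hrpos : 0 < r := by positivity
  have h1r : 1 / r < ε / 2 := by
    have hlt : 2 / ε < r := by rw [hrdef]; linarith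
    have := one_div_lt_one_div_of_lt h2ε hlt
    rwa [one_div_div] at this
  obtain ⟨t, ht⟩ := (isCompact_closedBall p r).elim_finite_subcover
    (fun y : X => ball y (ε / 8)) (fun _ => isOpen_ball)
    (fun x _ => Set.mem_iUnion.2 ⟨x, mem_ball_self (by linarith)⟩)
  have hev : ∀ᶠ j in atTop, ∀ y ∈ t, dist (gseq (σ j) y) (G y) < ε / 8 := by
    rw [eventually_all_finset]
    intro y _
    exact (Metric.tendsto_nhds.1 (hG y)) (ε / 8) (by linarith)
  filter_upwards [hev] with j hj
  have hsup : isoSup p r (gseq (σ j)) g ≤ ε / 2 := by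
    refine isoSup_le p hrpos _ _ fun x hx => ?_
    obtain ⟨y, hyt, hxy⟩ : ∃ y ∈ t, x ∈ ball y (ε / 8) := by
      have := ht (ball_subset_closedBall hx)
      simpa using this
    have hxy' : dist x y < ε / 8 := mem_ball.1 hxy
    have k1 := dist_triangle4 (gseq (σ j) x) (gseq (σ j) y) (g y) (g x)
    rw [(gseq (σ j)).dist_eq, g.dist_eq, dist_comm y x, hg_apply y] at k1
    have := hj y hyt
    linarith
  have hd := isoDist_le p hrpos (gseq (σ j)) g
  have hnn := isoDist_nonneg p (gseq (σ j)) g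
  rw [Real.dist_eq, sub_zero, abs_of_nonneg hnn]
  linarith

end Proper

/-- For a pointed proper metric space `(X, p)`, the function `d_p` is a
metric on `Iso(X)`, it is left-invariant, and `(Iso(X), d_p)` is proper: every sequence of
isometries at bounded `d_p`-distance from the identity has a subsequence converging in
`d_p` to an isometry. -/
theorem stmt0 {X : Type*} [MetricSpace X] [ProperSpace X] (p : X) :
    -- (1) `d_p` is a metric
    (∀ g h : X ≃ᵢ X, 0 ≤ isoDist p g h) ∧
    (∀ g h : X ≃ᵢ X, isoDist p g h = isoDist p h g) ∧
    (∀ g h k : X ≃ᵢ X, isoDist p g k ≤ isoDist p g h + isoDist p h k) ∧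
    (∀ g h : X ≃ᵢ X, isoDist p g h = 0 ↔ g = h) ∧
    -- (2) `d_p` is left-invariant
    (∀ k g h : X ≃ᵢ X, isoDist p (k * g) (k * h) = isoDist p g h) ∧
    -- (3) `(Iso(X), d_p)` is proper
    (∀ gseq : ℕ → X ≃ᵢ X, (∃ C : ℝ, ∀ j, isoDist p (gseq j) 1 ≤ C) →
      ∃ σ : ℕ → ℕ, StrictMono σ ∧ ∃ g : X ≃ᵢ X,
        Tendsto (fun j => isoDist p (gseq (σ j)) g) atTop (𝓝 0)) := by
  refine ⟨isoDist_nonneg p, isoDist_symm p, isoDist_triangle p, isoDist_eq_zero_iff p,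
    fun k g h => isoDist_left_inv p k g h, ?_⟩
  rintro gseq ⟨C, hC⟩
  exact isoDist_proper p gseq C hC
end

section
/- Let X be a metric space and let 𝔐(X) denote the collection of nonempty closed subsets of X equipped with the Hausdorff distance d_H. Let θ : [a, b] → 𝔐(X) satisfy θ(r) ⊆ θ(s) whenever a ≤ r ≤ s ≤ b, and assume θ(b) is compact. Then the set of points of [a, b] at which θ is discontinuous (with respect to d_H) is at most countable. -/
open Metric Set Topology Filter

/-- If `u ⊆ v` and the Hausdorff distance between them is at least `ε > 0`, then some point
of `v` is at distance at least `ε / 2` from `u`. -/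
lemma stmt1_aux {X : Type*} [MetricSpace X] {u v : Set X} {ε : ℝ} (hε : 0 < ε) (huv : u ⊆ v)
    (h : ε ≤ Metric.hausdorffDist u v) : ∃ y ∈ v, ε / 2 ≤ Metric.infDist y u := by
  by_contra hc
  push_neg at hc
  have h1 : Metric.hausdorffDist u v ≤ ε / 2 :=
    Metric.hausdorffDist_le_of_infDist (by linarith)
      (fun x hx => by rw [Metric.infDist_zero_of_mem (huv hx)]; linarith)
      (fun y hy => (hc y hy).le)
  linarith

/-- Let `θ : [a,b] → 𝔐(X)` be a monotone family of nonempty closed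
subsets of a metric space `X`, with `θ b` compact.  Then the set of points of `[a,b]` at
which `θ` is discontinuous with respect to the Hausdorff distance is at most countable. -/
theorem stmt1 {X : Type*} [MetricSpace X] (a b : ℝ) (hab : a ≤ b)
    (θ : ℝ → Set X)
    (hclosed : ∀ r ∈ Icc a b, IsClosed (θ r))
    (hne : ∀ r ∈ Icc a b, (θ r).Nonempty)
    (hmono : ∀ r ∈ Icc a b, ∀ s ∈ Icc a b, r ≤ s → θ r ⊆ θ s)
    (hcpt : IsCompact (θ b)) :
    Set.Countable {r ∈ Icc a b |
      ¬ (∀ ε > 0, ∃ δ > 0, ∀ s ∈ Icc a b, |s - r| < δ →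
          Metric.hausdorffDist (θ s) (θ r) < ε)} := by
  have hbmem : b ∈ Icc a b := ⟨hab, le_refl b⟩
  obtain ⟨c, c_count, c_sub⟩ := hcpt.isSeparable
  set π : ℝ → ℝ := fun r => min (max r a) b with hπdef
  have hπmem : ∀ r, π r ∈ Icc a b := fun r => ⟨le_min (le_max_right r a) hab, min_le_right _ _⟩
  have hπmono : Monotone π := fun r s h =>
    min_le_min (max_le_max h (le_refl a)) (le_refl b)
  have hπid : ∀ r ∈ Icc a b, π r = r := fun r hr => by
    simp only [hπdef, max_eq_left hr.1, min_eq_left hr.2]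
  set F : X → ℝ → ℝ := fun x r => Metric.infDist x (θ (π r)) with hFdef
  have hFanti : ∀ x, Antitone (F x) := fun x r s h =>
    Metric.infDist_le_infDist_of_subset
      (hmono _ (hπmem r) _ (hπmem s) (hπmono h)) (hne _ (hπmem r))
  have key : {r ∈ Icc a b |
      ¬ (∀ ε > 0, ∃ δ > 0, ∀ s ∈ Icc a b, |s - r| < δ →
          Metric.hausdorffDist (θ s) (θ r) < ε)} ⊆
      ⋃ x ∈ c, {r | ¬ContinuousAt (F x) r} := by
    rintro r ⟨hr, hdisc⟩
    push_neg at hdisc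
    obtain ⟨ε, hε, hbad⟩ := hdisc
    by_cases hP : ∀ δ > 0, ∃ s ∈ Icc a b, r ≤ s ∧ |s - r| < δ ∧
        ε ≤ Metric.hausdorffDist (θ s) (θ r)
    · -- right discontinuity
      have hchoice : ∀ n : ℕ, ∃ s, s ∈ Icc a b ∧ r ≤ s ∧ |s - r| < 1/((n:ℝ)+1) ∧
          ∃ y ∈ θ s, ε/2 ≤ Metric.infDist y (θ r) := by
        intro n
        obtain ⟨s, hs, hrs, hd, hge⟩ := hP (1/((n:ℝ)+1)) (by positivity)
        obtain ⟨y, hymem, hyd⟩ := stmt1_aux hε (hmono r hr s hs hrs)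
          (by rwa [Metric.hausdorffDist_comm] at hge)
        exact ⟨s, hs, hrs, hd, y, hymem, hyd⟩
      choose s hs hrs hsd y hy hyd using hchoice
      have hyb : ∀ n, y n ∈ θ b := fun n => hmono _ (hs n) b hbmem (hs n).2 (hy n)
      obtain ⟨ylim, hylimb, φ, hφ, hyt⟩ := hcpt.tendsto_subseq hyb
      have hstend : Filter.Tendsto s Filter.atTop (𝓝 r) := by
        rw [tendsto_iff_dist_tendsto_zero]
        apply squeeze_zero (fun n => dist_nonneg) (fun n => ?_)
          tendsto_one_div_add_atTop_nhds_zero_nat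
        rw [Real.dist_eq]
        exact (hsd n).le
      have hslim : Filter.Tendsto (fun n => s (φ n)) Filter.atTop (𝓝 r) :=
        hstend.comp hφ.tendsto_atTop
      have hyinf : ε/2 ≤ Metric.infDist ylim (θ r) :=
        ge_of_tendsto (((Metric.continuous_infDist_pt (θ r)).tendsto ylim).comp hyt)
          (Filter.Eventually.of_forall fun n => hyd (φ n))
      obtain ⟨x, hxc, hxd⟩ : ∃ x ∈ c, dist ylim x < ε/8 := by
        have hcl := c_sub hylimb
        rw [Metric.mem_closure_iff] at hcl
        exact hcl _ (by linarith)
      refine mem_iUnion₂.2 ⟨x, hxc, ?_⟩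
      intro hcont
      rw [Metric.continuousAt_iff] at hcont
      obtain ⟨δ, hδpos, hδ'⟩ := hcont (ε/8) (by linarith)
      have h1 : ∀ᶠ n in Filter.atTop, dist (s (φ n)) r < δ :=
        (Metric.tendsto_nhds.1 hslim) δ hδpos
      have h2 : ∀ᶠ n in Filter.atTop, dist (y (φ n)) ylim < ε/8 :=
        (Metric.tendsto_nhds.1 hyt) _ (by linarith)
      obtain ⟨n, hn1, hn2⟩ := (h1.and h2).exists
      have hπr : π r = r := hπid r hr
      have hπs : π (s (φ n)) = s (φ n) := hπid _ (hs (φ n))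
      have hFr : ε/2 - ε/8 ≤ F x r := by
        have h3 : Metric.infDist ylim (θ r) ≤ Metric.infDist x (θ r) + dist ylim x :=
          Metric.infDist_le_infDist_add_dist
        simp only [hFdef, hπr]
        linarith
      have hFs : F x (s (φ n)) ≤ ε/4 := by
        simp only [hFdef, hπs]
        calc Metric.infDist x (θ (s (φ n))) ≤ dist x (y (φ n)) :=
              Metric.infDist_le_dist_of_mem (hy (φ n))
          _ ≤ dist x ylim + dist ylim (y (φ n)) := dist_triangle _ _ _
          _ ≤ ε/8 + ε/8 := by
              rw [dist_comm x ylim, dist_comm ylim (y (φ n))]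
              exact add_le_add hxd.le hn2.le
          _ = ε/4 := by ring
      have hcontr := hδ' hn1
      rw [Real.dist_eq] at hcontr
      have habs : F x r - F x (s (φ n)) ≤ |F x (s (φ n)) - F x r| := by
        rw [abs_sub_comm]
        exact le_abs_self _
      linarith
    · -- left discontinuity
      push_neg at hP
      obtain ⟨δ0, hδ0, hδ0'⟩ := hP
      have hQ : ∀ δ > 0, ∃ s ∈ Icc a b, s ≤ r ∧ |s - r| < δ ∧
          ε ≤ Metric.hausdorffDist (θ s) (θ r) := by
        intro δ hδ
        obtain ⟨s, hsmem, hsd, hsge⟩ := hbad (min δ δ0) (lt_min hδ hδ0)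
        refine ⟨s, hsmem, ?_, lt_of_lt_of_le hsd (min_le_left _ _), hsge⟩
        by_contra hle
        push_neg at hle
        exact absurd hsge (not_le.2 (hδ0' s hsmem hle.le
          (lt_of_lt_of_le hsd (min_le_right _ _))))
      have hchoice : ∀ n : ℕ, ∃ s, s ∈ Icc a b ∧ s ≤ r ∧ |s - r| < 1/((n:ℝ)+1) ∧
          ∃ y ∈ θ r, ε/2 ≤ Metric.infDist y (θ s) := by
        intro n
        obtain ⟨s, hsmem, hsr, hsd, hsge⟩ := hQ (1/((n:ℝ)+1)) (by positivity)
        obtain ⟨y, hymem, hyd⟩ := stmt1_aux hε (hmono s hsmem r hr hsr) hsge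
        exact ⟨s, hsmem, hsr, hsd, y, hymem, hyd⟩
      choose s hs hsr hsd y hy hyd using hchoice
      have hyb : ∀ n, y n ∈ θ b := fun n => hmono r hr b hbmem hr.2 (hy n)
      obtain ⟨ylim, hylimb, φ, hφ, hyt⟩ := hcpt.tendsto_subseq hyb
      have hylimr : ylim ∈ θ r := (hclosed r hr).mem_of_tendsto hyt
        (Filter.Eventually.of_forall fun n => hy (φ n))
      have hstend : Filter.Tendsto s Filter.atTop (𝓝 r) := by
        rw [tendsto_iff_dist_tendsto_zero]
        apply squeeze_zero (fun n => dist_nonneg) (fun n => ?_)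
          tendsto_one_div_add_atTop_nhds_zero_nat
        rw [Real.dist_eq]
        exact (hsd n).le
      have hslim : Filter.Tendsto (fun n => s (φ n)) Filter.atTop (𝓝 r) :=
        hstend.comp hφ.tendsto_atTop
      have hra : a < r := by
        rcases eq_or_lt_of_le hr.1 with heq | h
        · exfalso
          obtain ⟨s0, hs0, hs0r, _, hge0⟩ := hQ 1 one_pos
          have hs0e : s0 = r := le_antisymm hs0r (heq ▸ hs0.1)
          rw [hs0e, Metric.hausdorffDist_self_zero] at hge0
          linarith
        · exact h
      have hkey : ∀ t, a ≤ t → t < r → ε/2 ≤ Metric.infDist ylim (θ t) := by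
        intro t hat htr
        have htmem : t ∈ Icc a b := ⟨hat, le_trans htr.le hr.2⟩
        apply ge_of_tendsto (((Metric.continuous_infDist_pt (θ t)).tendsto ylim).comp hyt)
        have hev : ∀ᶠ n in Filter.atTop, t < s (φ n) := hslim.eventually (eventually_gt_nhds htr)
        filter_upwards [hev] with n hn
        exact le_trans (hyd (φ n))
          (Metric.infDist_le_infDist_of_subset
            (hmono t htmem _ (hs (φ n)) hn.le) (hne t htmem))
      obtain ⟨x, hxc, hxd⟩ : ∃ x ∈ c, dist ylim x < ε/8 := by
        have hcl := c_sub hylimb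
        rw [Metric.mem_closure_iff] at hcl
        exact hcl _ (by linarith)
      refine mem_iUnion₂.2 ⟨x, hxc, ?_⟩
      intro hcont
      rw [Metric.continuousAt_iff] at hcont
      obtain ⟨δ, hδpos, hδ'⟩ := hcont (ε/8) (by linarith)
      set t := max a (r - δ/2) with htdef
      have hat : a ≤ t := le_max_left _ _
      have htr : t < r := max_lt hra (by linarith)
      have htlb : r - δ/2 ≤ t := le_max_right _ _
      have htd : dist t r < δ := by
        rw [Real.dist_eq, abs_sub_lt_iff]
        constructor <;> linarith
      have hπr : π r = r := hπid r hr
      have hπt : π t = t := hπid t ⟨hat, le_trans htr.le hr.2⟩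
      have hFr : F x r < ε/8 := by
        simp only [hFdef, hπr]
        calc Metric.infDist x (θ r) ≤ dist x ylim := Metric.infDist_le_dist_of_mem hylimr
          _ < ε/8 := by rw [dist_comm]; exact hxd
      have hFt : ε/2 - ε/8 ≤ F x t := by
        have h3 : Metric.infDist ylim (θ t) ≤ Metric.infDist x (θ t) + dist ylim x :=
          Metric.infDist_le_infDist_add_dist
        have h4 := hkey t hat htr
        simp only [hFdef, hπt]
        linarith
      have hcontr := hδ' htd
      rw [Real.dist_eq] at hcontr
      have habs : F x t - F x r ≤ |F x t - F x r| := le_abs_self _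
      linarith
  exact Set.Countable.mono key
    (Set.Countable.biUnion c_count fun x _ => (hFanti x).countable_not_continuousAt)
end

section
/- Let φ_i : G_i → G be a sequence of good approximations with regular neighborhoods A_i ⊆ G_i and A ⊆ G, and assume G is first countable. Then for each n ∈ ℕ and any sequence g_i ∈ A_i^n, there exist a subsequence (i_k) and an element g ∈ (closure A)^n such that φ_{i_k}(g_{i_k}) → g, and moreover, along the same subsequence, φ_{i_k}(g_{i_k}^m) → g^m for every m ∈ ℕ. In particular, φ_i(e_{G_i}) → e_G. -/
open Filter Topology Pointwise

/-- A sequence of maps `φ i : Gi i → G` is a sequence of *good approximations*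
with regular neighborhoods `Ai i ⊆ Gi i` and `A ⊆ G`. -/
structure IsGoodApprox {G : Type*} [Group G] [TopologicalSpace G] [IsTopologicalGroup G]
    {Gi : ℕ → Type*} [∀ i, Group (Gi i)] [∀ i, TopologicalSpace (Gi i)]
    [∀ i, IsTopologicalGroup (Gi i)]
    (φ : ∀ i, Gi i → G) (Ai : ∀ i, Set (Gi i)) (A : Set G) : Prop where
  one_mem_A : (1 : G) ∈ A
  symm_A : A⁻¹ = A
  open_A : IsOpen A
  compact_closure_A : IsCompact (closure A)
  one_mem_Ai : ∀ i, (1 : Gi i) ∈ Ai i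
  symm_Ai : ∀ i, (Ai i)⁻¹ = Ai i
  open_Ai : ∀ i, IsOpen (Ai i)
  compact_closure_Ai : ∀ i, IsCompact (closure (Ai i))
  prop_I : ∀ U : Set G, U ⊆ A → IsOpen U → U.Nonempty →
    ∀ᶠ i in atTop, (φ i '' Ai i ∩ U).Nonempty
  prop_II : ∀ V : Set G, IsOpen V → closure A ⊆ V →
    ∀ᶠ i in atTop, φ i '' Ai i ⊆ V
  prop_III : ∀ n : ℕ, ∀ g h : ∀ i, Gi i,
    (∀ i, g i ∈ Ai i ^ n) → (∀ i, h i ∈ Ai i ^ n) →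
    Tendsto (fun i => (φ i (g i * h i))⁻¹ * φ i (g i) * φ i (h i)) atTop (𝓝 1)
  prop_IV : ∀ n : ℕ, ∀ K : Set G, K ⊆ A → IsCompact K →
    ∃ i₀ : ℕ, ∀ i ≥ i₀, ∀ g ∈ Ai i ^ n, φ i g ∈ K → g ∈ Ai i
  prop_V : ∀ K U : Set G, K ⊆ U → U ⊆ A → IsCompact K → IsOpen U →
    ∃ Ui : ∀ i, Set (Gi i), (∀ i, IsOpen (Ui i) ∧ Ui i ⊆ Ai i) ∧
      ∀ᶠ i in atTop, φ i ⁻¹' K ∩ Ai i ⊆ Ui i ∧ Ui i ⊆ φ i ⁻¹' U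

/-- A sequence of subgroups `Hi i ≤ Gi i` is *small* with respect to the pairs `(φ i, Ai i)`. -/
def IsSmallSeq {G : Type*} [Group G] [TopologicalSpace G] [IsTopologicalGroup G]
    {Gi : ℕ → Type*} [∀ i, Group (Gi i)] [∀ i, TopologicalSpace (Gi i)]
    [∀ i, IsTopologicalGroup (Gi i)]
    (φ : ∀ i, Gi i → G) (Ai : ∀ i, Set (Gi i)) (Hi : ∀ i, Subgroup (Gi i)) : Prop :=
  (∀ᶠ i in atTop, (Hi i : Set (Gi i)) ⊆ Ai i) ∧
    ∀ h : ∀ i, Gi i, (∀ i, h i ∈ Hi i) →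
      Tendsto (fun i => φ i (h i)) atTop (𝓝 (1 : G))

lemma mypow_subset {M : Type*} [Monoid M] {s : Set M} (h1 : (1:M) ∈ s) :
    ∀ {m n : ℕ}, m ≤ n → s ^ m ⊆ s ^ n := by
  intro m n h
  induction h with
  | refl => exact subset_rfl
  | step _ ih =>
    intro x hx
    rw [pow_succ]
    exact mul_one x ▸ Set.mul_mem_mul (ih hx) h1

section Aux
set_option linter.unusedSectionVars false
variable {G : Type*} [Group G] [TopologicalSpace G] [IsTopologicalGroup G]
    [T2Space G] [LocallyCompactSpace G] [FirstCountableTopology G]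
    {Gi : ℕ → Type*} [∀ i, Group (Gi i)] [∀ i, TopologicalSpace (Gi i)]
    [∀ i, IsTopologicalGroup (Gi i)]
    {φ : ∀ i, Gi i → G} {Ai : ∀ i, Set (Gi i)} {A : Set G}

lemma tendstoOne (hga : IsGoodApprox φ Ai A) :
    Tendsto (fun i => φ i (1 : Gi i)) atTop (𝓝 (1:G)) := by
  have h := hga.prop_III 0 (fun i => 1) (fun i => 1)
    (fun i => by simp [Set.mem_one]) (fun i => by simp [Set.mem_one])
  simpa [mul_assoc] using h

lemma limA (hga : IsGoodApprox φ Ai A) (a : ∀ i, Gi i) (ha : ∀ i, a i ∈ Ai i)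
    (σ0 : ℕ → ℕ) (hσ0 : StrictMono σ0) :
    ∃ σ : ℕ → ℕ, StrictMono σ ∧ ∃ x ∈ closure A,
      Tendsto (fun k => φ (σ0 (σ k)) (a (σ0 (σ k)))) atTop (𝓝 x) := by
  obtain ⟨L, hLc, hAL, -⟩ :=
    exists_compact_between hga.compact_closure_A isOpen_univ (Set.subset_univ _)
  have hev : ∀ᶠ i in atTop, φ i '' Ai i ⊆ interior L := hga.prop_II _ isOpen_interior hAL
  have hfreq : ∃ᶠ k in atTop, (fun k => φ (σ0 k) (a (σ0 k))) k ∈ L := by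
    apply Eventually.frequently
    obtain ⟨N, hN⟩ := eventually_atTop.1 hev
    filter_upwards [eventually_ge_atTop N] with k hk
    exact interior_subset
      (hN (σ0 k) (le_trans hk hσ0.le_apply) (Set.mem_image_of_mem _ (ha (σ0 k))))
  obtain ⟨x, _, τ, hτ, htend⟩ := hLc.tendsto_subseq' hfreq
  have htend' : Tendsto (fun k => φ (σ0 (τ k)) (a (σ0 (τ k)))) atTop (𝓝 x) := htend
  refine ⟨τ, hτ, x, ?_, htend'⟩
  by_contra hx
  obtain ⟨U, W, hU, hW, hxU, hAW, hdUW⟩ :=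
    SeparatedNhds.of_isCompact_isCompact (s := {x}) isCompact_singleton
      hga.compact_closure_A (Set.disjoint_singleton_left.2 hx)
  have hevW : ∀ᶠ i in atTop, φ i '' Ai i ⊆ W := hga.prop_II _ hW hAW
  have hσtend : Tendsto (fun k => σ0 (τ k)) atTop atTop :=
    hσ0.tendsto_atTop.comp hτ.tendsto_atTop
  have hxW : x ∈ closure W := by
    apply mem_closure_of_tendsto htend'
    filter_upwards [hσtend.eventually hevW] with k hk
    exact hk (Set.mem_image_of_mem _ (ha _))
  have hWU : closure W ⊆ Uᶜ :=
    closure_minimal (fun y hy hyU => hdUW.le_bot ⟨hyU, hy⟩) hU.isClosed_compl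
  exact hWU hxW (hxU rfl)

lemma limAn (hga : IsGoodApprox φ Ai A) :
    ∀ n : ℕ, ∀ g : ∀ i, Gi i, (∀ i, g i ∈ Ai i ^ n) →
    ∀ σ0 : ℕ → ℕ, StrictMono σ0 →
    ∃ σ : ℕ → ℕ, StrictMono σ ∧ ∃ x ∈ (closure A) ^ n,
      Tendsto (fun k => φ (σ0 (σ k)) (g (σ0 (σ k)))) atTop (𝓝 x) := by
  intro n
  induction n with
  | zero =>
    intro g hg σ0 hσ0
    refine ⟨id, strictMono_id, 1, by simp [Set.mem_one], ?_⟩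
    have h1 : ∀ i, g i = 1 := fun i => by simpa [Set.mem_one] using hg i
    simp only [id_eq, h1]
    exact (tendstoOne hga).comp hσ0.tendsto_atTop
  | succ n ih =>
    intro g hg σ0 hσ0
    have hdecomp : ∀ i, ∃ b ∈ Ai i ^ n, ∃ a ∈ Ai i, b * a = g i := fun i => by
      have := hg i; rw [pow_succ] at this; exact this
    choose b hb a ha heq using hdecomp
    obtain ⟨σ1, hσ1, xb, hxb, htb⟩ := ih b hb σ0 hσ0
    obtain ⟨σ2, hσ2, xa, hxa, hta⟩ := limA hga a ha (σ0 ∘ σ1) (hσ0.comp hσ1)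
    refine ⟨σ1 ∘ σ2, hσ1.comp hσ2, xb * xa,
      by rw [pow_succ]; exact Set.mul_mem_mul hxb hxa, ?_⟩
    have hb' : ∀ i, b i ∈ Ai i ^ (n+1) :=
      fun i => mypow_subset (hga.one_mem_Ai i) (Nat.le_succ n) (hb i)
    have ha' : ∀ i, a i ∈ Ai i ^ (n+1) := fun i =>
      mypow_subset (hga.one_mem_Ai i) (Nat.succ_le_succ (Nat.zero_le n))
        (by simpa [pow_one] using ha i)
    have hε := hga.prop_III (n+1) b a hb' ha'
    have hσtend : Tendsto (fun k => σ0 (σ1 (σ2 k))) atTop atTop :=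
      hσ0.tendsto_atTop.comp (hσ1.tendsto_atTop.comp hσ2.tendsto_atTop)
    have hεs : Tendsto (fun k =>
        (φ (σ0 (σ1 (σ2 k))) (b (σ0 (σ1 (σ2 k))) * a (σ0 (σ1 (σ2 k)))))⁻¹ *
        φ (σ0 (σ1 (σ2 k))) (b (σ0 (σ1 (σ2 k)))) *
        φ (σ0 (σ1 (σ2 k))) (a (σ0 (σ1 (σ2 k))))) atTop (𝓝 1) := hε.comp hσtend
    have htb2 : Tendsto (fun k => φ (σ0 (σ1 (σ2 k))) (b (σ0 (σ1 (σ2 k)))))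
        atTop (𝓝 xb) := htb.comp hσ2.tendsto_atTop
    have hta2 : Tendsto (fun k => φ (σ0 (σ1 (σ2 k))) (a (σ0 (σ1 (σ2 k)))))
        atTop (𝓝 xa) := hta
    have hfinal := (htb2.mul hta2).mul hεs.inv
    rw [inv_one, mul_one] at hfinal
    apply hfinal.congr
    intro k
    simp only [Function.comp_apply]
    rw [← heq (σ0 (σ1 (σ2 k)))]
    group

end Aux

/-- Along a good approximation, any sequence `g i ∈ (Ai i)^n` has a
subsequence along which `φ i (g i)` converges to some `g ∈ (closure A)^n`, and moreover
`φ i (g i ^ m) → g ^ m` for every `m`.  In particular `φ i 1 → 1`. -/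
theorem stmt3 {G : Type*} [Group G] [TopologicalSpace G] [IsTopologicalGroup G]
    [T2Space G] [LocallyCompactSpace G] [FirstCountableTopology G]
    {Gi : ℕ → Type*} [∀ i, Group (Gi i)] [∀ i, TopologicalSpace (Gi i)]
    [∀ i, IsTopologicalGroup (Gi i)] [∀ i, T2Space (Gi i)] [∀ i, LocallyCompactSpace (Gi i)]
    (φ : ∀ i, Gi i → G) (Ai : ∀ i, Set (Gi i)) (A : Set G)
    (hga : IsGoodApprox φ Ai A) :
    (∀ n : ℕ, ∀ g : ∀ i, Gi i, (∀ i, g i ∈ Ai i ^ n) →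
      ∃ σ : ℕ → ℕ, StrictMono σ ∧ ∃ glim ∈ (closure A) ^ n,
        Tendsto (fun k => φ (σ k) (g (σ k))) atTop (𝓝 glim) ∧
        ∀ m : ℕ, Tendsto (fun k => φ (σ k) (g (σ k) ^ m)) atTop (𝓝 (glim ^ m))) ∧
    Tendsto (fun i => φ i (1 : Gi i)) atTop (𝓝 (1 : G)) := by
  refine ⟨?_, tendstoOne hga⟩
  intro n g hg
  obtain ⟨σ, hσ, glim, hglim, htend⟩ := limAn hga n g hg id strictMono_id
  simp only [id_eq] at htend
  refine ⟨σ, hσ, glim, hglim, htend, ?_⟩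
  intro m
  induction m with
  | zero =>
    simpa [Function.comp_def] using (tendstoOne hga).comp hσ.tendsto_atTop
  | succ m ihm =>
    have hgm : ∀ i, g i ^ m ∈ Ai i ^ (n * m + n) := fun i =>
      mypow_subset (hga.one_mem_Ai i) (Nat.le_add_right _ _)
        (by rw [pow_mul]; exact Set.pow_mem_pow (hg i))
    have hg1 : ∀ i, g i ∈ Ai i ^ (n * m + n) :=
      fun i => mypow_subset (hga.one_mem_Ai i) (Nat.le_add_left _ _) (hg i)
    have hε := hga.prop_III (n * m + n) (fun i => g i ^ m) g hgm hg1
    have hεs := hε.comp hσ.tendsto_atTop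
    have hfinal := (ihm.mul htend).mul hεs.inv
    rw [inv_one, mul_one] at hfinal
    have : glim ^ m * glim = glim ^ (m + 1) := by rw [pow_succ]
    rw [this] at hfinal
    apply hfinal.congr
    intro k
    simp only [Function.comp]
    rw [pow_succ]
    group
end

section
/- Let φ_i : G_i → G be a sequence of good approximations with regular neighborhoods A_i ⊆ G_i and A ⊆ G, and assume G is second countable. Then for any open symmetric set B ⊆ A there exist open symmetric sets B_i ⊆ A_i such that the maps φ_i form a sequence of good approximations with regular neighborhoods B_i and B. Moreover, a sequence of subgroups H_i ≤ G_i is small with respect to the pairs (φ_i, A_i) if and only if it is small with respect to the pairs (φ_i, B_i). -/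
open Filter Topology Pointwise

section Helpers

variable {G : Type*} [Group G] [TopologicalSpace G] [IsTopologicalGroup G]
    {Gi : ℕ → Type*} [∀ i, Group (Gi i)] [∀ i, TopologicalSpace (Gi i)]
    [∀ i, IsTopologicalGroup (Gi i)]
    {φ : ∀ i, Gi i → G} {Ai : ∀ i, Set (Gi i)} {A : Set G}

lemma ga_phi_one (hga : IsGoodApprox φ Ai A) :
    Tendsto (fun i => φ i (1 : Gi i)) atTop (𝓝 (1 : G)) := by
  have h := hga.prop_III 0 (fun _ => 1) (fun _ => 1) (fun i => by simp) (fun i => by simp)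
  simpa using h

lemma ga_uniform_III (hga : IsGoodApprox φ Ai A) (n : ℕ) {W : Set G} (hW : W ∈ 𝓝 (1 : G)) :
    ∀ᶠ i in atTop, ∀ g h : Gi i, g ∈ Ai i ^ n → h ∈ Ai i ^ n →
      (φ i (g * h))⁻¹ * φ i g * φ i h ∈ W := by
  classical
  by_contra hcon
  rw [Filter.not_eventually] at hcon
  set P : ℕ → Prop := fun i => ∃ g h : Gi i, g ∈ Ai i ^ n ∧ h ∈ Ai i ^ n ∧
      (φ i (g * h))⁻¹ * φ i g * φ i h ∉ W with hPdef
  have hPfreq : ∃ᶠ i in atTop, P i := by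
    refine hcon.mono fun i hi => ?_
    push_neg at hi
    obtain ⟨g, h, hg, hh, hW⟩ := hi
    exact ⟨g, h, hg, hh, hW⟩
  let g : ∀ i, Gi i := fun i => if hp : P i then hp.choose else 1
  let h : ∀ i, Gi i := fun i => if hp : P i then hp.choose_spec.choose else 1
  have hg : ∀ i, g i ∈ Ai i ^ n := by
    intro i
    simp only [g]
    split
    · next hp => exact hp.choose_spec.choose_spec.1
    · exact Set.one_mem_pow (hga.one_mem_Ai i)
  have hh : ∀ i, h i ∈ Ai i ^ n := by
    intro i
    simp only [h]
    split
    · next hp => exact hp.choose_spec.choose_spec.2.1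
    · exact Set.one_mem_pow (hga.one_mem_Ai i)
  have hev := (hga.prop_III n g h hg hh).eventually_mem hW
  obtain ⟨i, hPi, hWi⟩ := (hPfreq.and_eventually hev).exists
  have : (φ i (g i * h i))⁻¹ * φ i (g i) * φ i (h i) ∉ W := by
    simp only [g, h, dif_pos hPi]
    exact hPi.choose_spec.choose_spec.2.2
  exact this hWi

lemma ga_uniform_inv (hga : IsGoodApprox φ Ai A) (n : ℕ) {K V : Set G}
    (hK : IsCompact K) (hV : IsOpen V) (hKV : K⁻¹ ⊆ V) :
    ∀ᶠ i in atTop, ∀ g : Gi i, g ∈ Ai i ^ n → φ i g ∈ K → φ i g⁻¹ ∈ V := by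
  obtain ⟨W, hW, hKW⟩ := compact_open_separated_mul_right hK.inv hV hKV
  obtain ⟨W', hW'open, hW'1, hW'W⟩ := exists_open_nhds_one_mul_subset hW
  have hW'nhds : W' ∈ 𝓝 (1 : G) := hW'open.mem_nhds hW'1
  filter_upwards [(ga_phi_one hga).eventually_mem hW'nhds,
    ga_uniform_III hga n hW'nhds] with i h1 h3
  intro g hg hgK
  have hginv : g⁻¹ ∈ Ai i ^ n := by
    have hsymm : (Ai i ^ n)⁻¹ = Ai i ^ n := by rw [← inv_pow, hga.symm_Ai i]
    rw [← hsymm]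
    exact Set.inv_mem_inv.2 hg
  have he := h3 g g⁻¹ hg hginv
  have key : φ i g⁻¹ = (φ i g)⁻¹ * (φ i 1 * ((φ i (g * g⁻¹))⁻¹ * φ i g * φ i g⁻¹)) := by
    rw [mul_inv_cancel]
    group
  have hmem : φ i g⁻¹ ∈ K⁻¹ * W := by
    rw [key]
    exact Set.mul_mem_mul (Set.inv_mem_inv.2 hgK) (hW'W (Set.mul_mem_mul h1 he))
  exact hKW hmem

end Helpers

/-- A good approximation can be localized: for any open symmetric
`B ⊆ A` there are open symmetric `Bi i ⊆ Ai i` making `φ` a good approximation with regular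
neighborhoods `Bi` and `B`, and smallness of sequences of subgroups with respect to
`(φ, Ai)` and `(φ, Bi)` coincide. -/


theorem stmt5 {G : Type*} [Group G] [TopologicalSpace G] [IsTopologicalGroup G]
    [T2Space G] [LocallyCompactSpace G] [SecondCountableTopology G]
    {Gi : ℕ → Type*} [∀ i, Group (Gi i)] [∀ i, TopologicalSpace (Gi i)]
    [∀ i, IsTopologicalGroup (Gi i)] [∀ i, T2Space (Gi i)] [∀ i, LocallyCompactSpace (Gi i)]
    (φ : ∀ i, Gi i → G) (Ai : ∀ i, Set (Gi i)) (A : Set G)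
    (hga : IsGoodApprox φ Ai A)
    (B : Set G) (hBA : B ⊆ A) (hBopen : IsOpen B) (hB1 : (1 : G) ∈ B)
    (hBsymm : B⁻¹ = B) :
    ∃ Bi : ∀ i, Set (Gi i),
      (∀ i, Bi i ⊆ Ai i ∧ IsOpen (Bi i) ∧ (1 : Gi i) ∈ Bi i ∧ (Bi i)⁻¹ = Bi i) ∧
      IsGoodApprox φ Bi B ∧
      (∀ Hi : ∀ i, Subgroup (Gi i), IsSmallSeq φ Ai Hi ↔ IsSmallSeq φ Bi Hi) := by
  classical
  -- a fixed compact neighborhood of 1 inside B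
  obtain ⟨K₀, hK₀c, hK₀1, hK₀B⟩ := exists_compact_subset hBopen hB1
  -- a countable family of compacts whose interiors cover B
  choose Q hQc hQi hQB using fun x : B => exists_compact_subset hBopen x.2
  obtain ⟨T, hTc, hTU⟩ := TopologicalSpace.isOpen_iUnion_countable
      (fun x : B => interior (Q x)) (fun _ => isOpen_interior)
  have hTne : T.Nonempty := by
    by_contra hne
    rw [Set.not_nonempty_iff_eq_empty] at hne
    have h1 : (1 : G) ∈ ⋃ x : B, interior (Q x) := Set.mem_iUnion.2 ⟨⟨1, hB1⟩, hQi _⟩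
    rw [← hTU, hne] at h1
    simp at h1
  obtain ⟨e, he⟩ := hTc.exists_eq_range hTne
  have hcover : B ⊆ ⋃ j : ℕ, interior (Q (e j)) := by
    intro x hx
    have hx1 : x ∈ ⋃ y : B, interior (Q y) := Set.mem_iUnion.2 ⟨⟨x, hx⟩, hQi _⟩
    rw [← hTU, he, Set.biUnion_range] at hx1
    exact hx1
  -- the exhaustion
  set K : ℕ → Set G := fun n => K₀ ∪ ⋃ j ∈ Set.Iic n, Q (e j) with hKdef
  have hKcomp : ∀ n, IsCompact (K n) := fun n =>
    hK₀c.union ((Set.finite_Iic n).isCompact_biUnion fun j _ => hQc (e j))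
  have hKB : ∀ n, K n ⊆ B := fun n =>
    Set.union_subset hK₀B (Set.iUnion₂_subset fun j _ => hQB (e j))
  have hKmono : Monotone K := fun a b hab =>
    Set.union_subset_union_right _
      (Set.biUnion_subset_biUnion_left (Set.Iic_subset_Iic.2 hab))
  have hK₀K : ∀ n, K₀ ⊆ K n := fun _ => Set.subset_union_left
  have hKcof : ∀ C : Set G, IsCompact C → C ⊆ B → ∃ n, C ⊆ K n := by
    intro C hC hCB
    obtain ⟨s, hs⟩ := hC.elim_finite_subcover (fun j : ℕ => interior (Q (e j)))
      (fun _ => isOpen_interior) (hCB.trans hcover)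
    refine ⟨s.sup id, hs.trans ?_⟩
    refine Set.iUnion₂_subset fun j hj => ?_
    refine interior_subset.trans (Set.subset_union_of_subset_right ?_ _)
    exact Set.subset_biUnion_of_mem (u := fun j => Q (e j)) (Set.mem_Iic.2 (Finset.le_sup (f := id) hj))
  -- the sets from property V and the thresholds
  choose U hUprop hUev using fun n => hga.prop_V (K n) B (hKB n) hBA (hKcomp n) hBopen
  choose N hN using fun n => eventually_atTop.1 (hUev n)
  -- a strictly monotone version of N
  obtain ⟨N', hN'zero, hN'succ⟩ :
      ∃ N' : ℕ → ℕ, N' 0 = N 0 ∧ ∀ n, N' (n + 1) = max (N (n + 1)) (N' n + 1) :=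
    ⟨fun n => Nat.rec (N 0) (fun k ih => max (N (k + 1)) (ih + 1)) n, rfl, fun _ => rfl⟩
  have hN'mono : StrictMono N' := strictMono_nat_of_lt_succ fun n => by
    rw [hN'succ]
    exact lt_of_lt_of_le (Nat.lt_succ_self _) (le_max_right _ _)
  have hNN' : ∀ n, N n ≤ N' n := fun n => by
    cases n with
    | zero => exact le_of_eq hN'zero.symm
    | succ k => rw [hN'succ]; exact le_max_left _ _
  have hN'ge : ∀ n, n ≤ N' n := fun _ => hN'mono.le_apply
  set m : ℕ → ℕ := fun i => @Nat.findGreatest (fun n => N' n ≤ i) (fun n => Nat.decLe _ _) i with hmdef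
  set C : ∀ i, Set (Gi i) := fun i => U (m i) i with hCdef
  have hCopen : ∀ i, IsOpen (C i) := fun i => (hUprop (m i) i).1
  have hCA : ∀ i, C i ⊆ Ai i := fun i => (hUprop (m i) i).2
  have hmspec : ∀ i, N' 0 ≤ i → N' (m i) ≤ i := by
    intro i hi
    simp only [hmdef]
    letI : DecidablePred fun n : ℕ => N' n ≤ i := fun n => Nat.decLe _ _
    exact Nat.findGreatest_spec (P := fun n => N' n ≤ i) (Nat.zero_le i) hi
  have hCin : ∀ i, N' 0 ≤ i → φ i ⁻¹' (K (m i)) ∩ Ai i ⊆ C i := fun i hi =>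
    (hN (m i) i ((hNN' (m i)).trans (hmspec i hi))).1
  have hCB' : ∀ i, N' 0 ≤ i → C i ⊆ φ i ⁻¹' B := fun i hi =>
    (hN (m i) i ((hNN' (m i)).trans (hmspec i hi))).2
  have hmge : ∀ n i, N' n ≤ i → n ≤ m i := by
    intro n i hi
    simp only [hmdef]
    letI : DecidablePred fun k : ℕ => N' k ≤ i := fun k => Nat.decLe _ _
    exact Nat.le_findGreatest (P := fun k => N' k ≤ i) ((hN'ge n).trans hi) hi
  -- the key absorption property of C
  have hF2 : ∀ Cs : Set G, IsCompact Cs → Cs ⊆ B →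
      ∀ᶠ i in atTop, φ i ⁻¹' Cs ∩ Ai i ⊆ C i := by
    intro Cs hCs hCsB
    obtain ⟨n, hn⟩ := hKcof Cs hCs hCsB
    filter_upwards [eventually_ge_atTop (N' n)] with i hi
    have h0 : N' 0 ≤ i := le_trans (hN'mono.monotone (Nat.zero_le n)) hi
    have hKsub : Cs ⊆ K (m i) := hn.trans (hKmono (hmge n i hi))
    exact fun g hg => hCin i h0 ⟨hKsub hg.1, hg.2⟩
  -- the definition of Bi
  set Bi : ∀ i, Set (Gi i) := fun i =>
    @ite _ ((1 : Gi i) ∈ C i ∩ (C i)⁻¹ ∧ N' 0 ≤ i) (Classical.propDecidable _)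
      (C i ∩ (C i)⁻¹) (Ai i) with hBidef
  have hBiA : ∀ i, Bi i ⊆ Ai i := by
    intro i
    simp only [hBidef]
    split
    · exact Set.inter_subset_left.trans (hCA i)
    · exact subset_rfl
  have hBiopen : ∀ i, IsOpen (Bi i) := by
    intro i
    simp only [hBidef]
    split
    · exact (hCopen i).inter (hCopen i).inv
    · exact hga.open_Ai i
  have hBi1 : ∀ i, (1 : Gi i) ∈ Bi i := by
    intro i
    simp only [hBidef]
    split
    · next h => exact h.1
    · exact hga.one_mem_Ai i
  have hBisymm : ∀ i, (Bi i)⁻¹ = Bi i := by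
    intro i
    simp only [hBidef]
    split
    · rw [Set.inter_inv, inv_inv, Set.inter_comm]
    · exact hga.symm_Ai i
  -- the eventual regime
  have hφ1 := ga_phi_one hga
  have hreg : ∀ᶠ i in atTop, Bi i = C i ∩ (C i)⁻¹ ∧ N' 0 ≤ i := by
    filter_upwards [eventually_ge_atTop (N' 0),
      hφ1.eventually_mem (isOpen_interior.mem_nhds hK₀1)] with i hi hφ
    have h1C : (1 : Gi i) ∈ C i :=
      hCin i hi ⟨hK₀K (m i) (interior_subset hφ), hga.one_mem_Ai i⟩
    have hcond : (1 : Gi i) ∈ C i ∩ (C i)⁻¹ ∧ N' 0 ≤ i :=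
      ⟨⟨h1C, Set.mem_inv.2 (by simpa using h1C)⟩, hi⟩
    refine ⟨?_, hi⟩
    simp only [hBidef]
    rw [if_pos hcond]
  -- the master membership lemma
  have hM : ∀ n (Ks : Set G), IsCompact Ks → Ks ⊆ B →
      ∀ᶠ i in atTop, ∀ g : Gi i, g ∈ Ai i ^ n → g ∈ Ai i → φ i g ∈ Ks → g ∈ Bi i := by
    intro n Ks hKs hKsB
    have hKsinvB : Ks⁻¹ ⊆ B := by
      rw [← hBsymm]
      exact Set.inv_subset_inv.2 hKsB
    obtain ⟨L, hLc, hKsL, hLB⟩ := exists_compact_between hKs.inv hBopen hKsinvB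
    filter_upwards [ga_uniform_inv hga n hKs isOpen_interior hKsL,
      hF2 Ks hKs hKsB, hF2 L hLc hLB, hreg] with i hinv hF2K hF2L hr
    intro g hgn hgA hgK
    have hgC : g ∈ C i := hF2K ⟨hgK, hgA⟩
    have hginvA : g⁻¹ ∈ Ai i := by
      rw [← hga.symm_Ai i]
      exact Set.inv_mem_inv.2 hgA
    have hginvC : g⁻¹ ∈ C i := hF2L ⟨show φ i g⁻¹ ∈ L from interior_subset (hinv g hgn hgK), hginvA⟩
    rw [hr.1]
    exact ⟨hgC, Set.mem_inv.2 hginvC⟩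
  refine ⟨Bi, fun i => ⟨hBiA i, hBiopen i, hBi1 i, hBisymm i⟩, ?_, ?_⟩
  · constructor
    · exact hB1
    · exact hBsymm
    · exact hBopen
    · exact hga.compact_closure_A.of_isClosed_subset isClosed_closure
        (closure_mono hBA)
    · exact hBi1
    · exact hBisymm
    · exact hBiopen
    · exact fun i => (hga.compact_closure_Ai i).of_isClosed_subset isClosed_closure
        (closure_mono (hBiA i))
    · -- prop I
      intro Us hUB hUopen hUne
      obtain ⟨x, hx⟩ := hUne
      obtain ⟨Kx, hKxc, hxKx, hKxU⟩ := exists_compact_subset hUopen hx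
      have hIA := hga.prop_I (interior Kx)
        ((interior_subset.trans hKxU).trans (hUB.trans hBA)) isOpen_interior ⟨x, hxKx⟩
      filter_upwards [hIA, hM 1 Kx hKxc (hKxU.trans hUB)] with i hI hMi
      obtain ⟨y, hy1, hy2⟩ := hI
      obtain ⟨g, hgA, rfl⟩ := hy1
      have hgB : g ∈ Bi i := hMi g (by rw [pow_one]; exact hgA) hgA (interior_subset hy2)
      exact ⟨φ i g, ⟨g, hgB, rfl⟩, hKxU (interior_subset hy2)⟩
    · -- prop II
      intro V hVopen hclV
      filter_upwards [hreg] with i hr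
      rintro y ⟨g, hg, rfl⟩
      have hgC : g ∈ C i := by
        rw [hr.1] at hg
        exact hg.1
      exact hclV (subset_closure (hCB' i hr.2 hgC))
    · -- prop III
      intro n g h hg hh
      exact hga.prop_III n g h (fun i => Set.pow_subset_pow_left (hBiA i) (hg i))
        (fun i => Set.pow_subset_pow_left (hBiA i) (hh i))
    · -- prop IV
      intro n Ks hKsB hKsc
      obtain ⟨i₁, hi₁⟩ := hga.prop_IV n Ks (hKsB.trans hBA) hKsc
      obtain ⟨i₂, hi₂⟩ := eventually_atTop.1 (hM n Ks hKsc hKsB)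
      refine ⟨max i₁ i₂, fun i hi g hg hgK => ?_⟩
      have hgA : g ∈ Ai i := hi₁ i (le_trans (le_max_left _ _) hi) g
        (Set.pow_subset_pow_left (hBiA i) hg) hgK
      exact hi₂ i (le_trans (le_max_right _ _) hi) g
        (Set.pow_subset_pow_left (hBiA i) hg) hgA hgK
    · -- prop V
      intro Ks Us hKU hUB hKc hUopen
      obtain ⟨Vi, hVi1, hVi2⟩ := hga.prop_V Ks Us hKU (hUB.trans hBA) hKc hUopen
      refine ⟨fun i => Vi i ∩ Bi i,
        fun i => ⟨(hVi1 i).1.inter (hBiopen i), Set.inter_subset_right⟩, ?_⟩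
      filter_upwards [hVi2] with i hV
      exact ⟨fun g hg => ⟨hV.1 ⟨hg.1, hBiA i hg.2⟩, hg.2⟩,
        Set.inter_subset_left.trans hV.2⟩
  · -- smallness
    intro Hi
    constructor
    · rintro ⟨hH1, hH2⟩
      refine ⟨?_, hH2⟩
      have hφH : ∀ᶠ i in atTop, ∀ h ∈ Hi i, φ i h ∈ interior K₀ := by
        by_contra hcon
        rw [Filter.not_eventually] at hcon
        set P : ℕ → Prop := fun i => ∃ h, h ∈ Hi i ∧ φ i h ∉ interior K₀ with hPdef
        have hPfreq : ∃ᶠ i in atTop, P i := by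
          refine hcon.mono fun i hi => ?_
          push_neg at hi
          exact hi
        let h : ∀ i, Gi i := fun i => if hp : P i then hp.choose else 1
        have hhH : ∀ i, h i ∈ Hi i := by
          intro i
          simp only [h]
          split
          · next hp => exact hp.choose_spec.1
          · exact (Hi i).one_mem
        have hev := (hH2 h hhH).eventually_mem (isOpen_interior.mem_nhds hK₀1)
        obtain ⟨i, hPi, hmem⟩ := (hPfreq.and_eventually hev).exists
        have : φ i (h i) ∉ interior K₀ := by
          simp only [h, dif_pos hPi]
          exact hPi.choose_spec.2
        exact this hmem
      filter_upwards [hφH, hH1, hF2 K₀ hK₀c hK₀B, hreg] with i hφHi hH1i hF2i hr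
      intro x hx
      have hxC : x ∈ C i := hF2i ⟨show φ i x ∈ K₀ from interior_subset (hφHi x hx), hH1i hx⟩
      have hxinvC : x⁻¹ ∈ C i :=
        hF2i ⟨show φ i x⁻¹ ∈ K₀ from interior_subset (hφHi _ ((Hi i).inv_mem hx)),
          hH1i ((Hi i).inv_mem hx)⟩
      rw [hr.1]
      exact ⟨hxC, Set.mem_inv.2 hxinvC⟩
    · rintro ⟨hH1, hH2⟩
      exact ⟨hH1.mono fun i hi => hi.trans (hBiA i), hH2⟩
end

section
/- Let φ_i : G_i → G be a sequence of good approximations with regular neighborhoods A_i ⊆ G_i and A ⊆ G. Then for each n ∈ ℕ and each open set V ⊆ G with e_G ∈ V, if i is large enough then for every p ∈ A_i^n there is an open set U ⊆ G_i with p ∈ U such that φ_i(x)^{-1} φ_i(p) ∈ V for all x ∈ U. -/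
open Filter Topology Pointwise

private theorem unif_III {G : Type*} [Group G] [TopologicalSpace G] [IsTopologicalGroup G]
    {Gi : ℕ → Type*} [∀ i, Group (Gi i)] [∀ i, TopologicalSpace (Gi i)]
    [∀ i, IsTopologicalGroup (Gi i)]
    {φ : ∀ i, Gi i → G} {Ai : ∀ i, Set (Gi i)} {A : Set G}
    (hga : IsGoodApprox φ Ai A) (n : ℕ) (W : Set G) (hW : IsOpen W) (h1W : (1:G) ∈ W) :
    ∀ᶠ i in atTop, ∀ g ∈ Ai i ^ n, ∀ h ∈ Ai i ^ n,
      (φ i (g * h))⁻¹ * φ i g * φ i h ∈ W := by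
  classical
  by_contra hc
  rw [Filter.not_eventually] at hc
  have hfreq : ∃ᶠ i in atTop, ∃ q : Gi i × Gi i, q.1 ∈ Ai i ^ n ∧ q.2 ∈ Ai i ^ n ∧
      (φ i (q.1 * q.2))⁻¹ * φ i q.1 * φ i q.2 ∉ W := by
    refine hc.mono fun i hi => ?_
    push_neg at hi
    obtain ⟨g, hg, h, hh, hx⟩ := hi
    exact ⟨(g, h), hg, hh, hx⟩
  set Q : ∀ i : ℕ, Prop := fun i => ∃ q : Gi i × Gi i, q.1 ∈ Ai i ^ n ∧ q.2 ∈ Ai i ^ n ∧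
      (φ i (q.1 * q.2))⁻¹ * φ i q.1 * φ i q.2 ∉ W with hQdef
  set g : ∀ i, Gi i := fun i => if hi : Q i then hi.choose.1 else 1 with hgdef
  set h : ∀ i, Gi i := fun i => if hi : Q i then hi.choose.2 else 1 with hhdef
  have hg : ∀ i, g i ∈ Ai i ^ n := by
    intro i
    by_cases hi : Q i
    · simp only [hgdef, dif_pos hi]; exact hi.choose_spec.1
    · simp only [hgdef, dif_neg hi]; exact Set.one_mem_pow (hga.one_mem_Ai i)
  have hh : ∀ i, h i ∈ Ai i ^ n := by
    intro i
    by_cases hi : Q i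
    · simp only [hhdef, dif_pos hi]; exact hi.choose_spec.2.1
    · simp only [hhdef, dif_neg hi]; exact Set.one_mem_pow (hga.one_mem_Ai i)
  have hev : ∀ᶠ i in atTop, (φ i (g i * h i))⁻¹ * φ i (g i) * φ i (h i) ∈ W :=
    (hga.prop_III n g h hg hh).eventually_mem (hW.mem_nhds h1W)
  obtain ⟨i, hQi, hWi⟩ := (hfreq.and_eventually hev).exists
  have hbad : (φ i (g i * h i))⁻¹ * φ i (g i) * φ i (h i) ∉ W := by
    simp only [hgdef, hhdef, dif_pos hQi]
    rw [dif_pos hQi, dif_pos hQi]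
    exact hQi.choose_spec.2.2
  exact hbad hWi

/-- Approximate continuity of good approximations: for each `n` and each
open neighborhood `V` of the identity in `G`, for all large `i`, every `p ∈ (Ai i)^n` has an
open neighborhood `U` with `(φ i x)⁻¹ * φ i p ∈ V` for all `x ∈ U`. -/
theorem stmt6 {G : Type*} [Group G] [TopologicalSpace G] [IsTopologicalGroup G]
    [T2Space G] [LocallyCompactSpace G]
    {Gi : ℕ → Type*} [∀ i, Group (Gi i)] [∀ i, TopologicalSpace (Gi i)]
    [∀ i, IsTopologicalGroup (Gi i)] [∀ i, T2Space (Gi i)] [∀ i, LocallyCompactSpace (Gi i)]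
    (φ : ∀ i, Gi i → G) (Ai : ∀ i, Set (Gi i)) (A : Set G)
    (hga : IsGoodApprox φ Ai A) :
    ∀ n : ℕ, ∀ V : Set G, IsOpen V → (1 : G) ∈ V →
      ∀ᶠ i in atTop, ∀ p ∈ Ai i ^ n,
        ∃ U : Set (Gi i), IsOpen U ∧ p ∈ U ∧
          ∀ x ∈ U, (φ i x)⁻¹ * φ i p ∈ V := by
  intro n V hV h1V
  obtain ⟨W, hWo, hW1, hWsymm, hWV⟩ : ∃ W : Set G, IsOpen W ∧ (1:G) ∈ W ∧ W⁻¹ = W ∧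
      W * W ⊆ V := by
    obtain ⟨W, hWo, hW1, hWV⟩ := exists_open_nhds_one_mul_subset (hV.mem_nhds h1V)
    refine ⟨W ∩ W⁻¹, hWo.inter hWo.inv, ⟨hW1, by simpa using hW1⟩,
      by ext x; simp [and_comm], ?_⟩
    exact (Set.mul_subset_mul Set.inter_subset_left Set.inter_subset_left).trans hWV
  have hWA : IsOpen (W ∩ A) := hWo.inter hga.open_A
  have h1WA : (1:G) ∈ W ∩ A := ⟨hW1, hga.one_mem_A⟩
  obtain ⟨K, hKc, h1K, hKWA⟩ := exists_compact_subset hWA h1WA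
  obtain ⟨Ui, hUi, hUiev⟩ := hga.prop_V K (W ∩ A) hKWA Set.inter_subset_right hKc hWA
  have hφ1 : Tendsto (fun i => φ i 1) atTop (𝓝 (1:G)) := by
    have h1pow : ∀ i, (1 : Gi i) ∈ Ai i ^ 0 := fun i => by simp
    have := hga.prop_III 0 (fun _ => 1) (fun _ => 1) h1pow h1pow
    simpa using this
  have hunif := unif_III hga (max n 1) W hWo hW1
  filter_upwards [hunif, hUiev, hφ1.eventually_mem (isOpen_interior.mem_nhds h1K)]
    with i hIII hUiP hφ1i
  obtain ⟨hUK, hUW⟩ := hUiP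
  intro p hp
  have h1Ui : (1 : Gi i) ∈ Ui i := hUK ⟨Set.mem_preimage.2 (interior_subset hφ1i), hga.one_mem_Ai i⟩
  refine ⟨(fun x => p⁻¹ * x) ⁻¹' Ui i,
    (hUi i).1.preimage (continuous_const.mul continuous_id), by simpa using h1Ui, ?_⟩
  intro x hx
  have hqUi : p⁻¹ * x ∈ Ui i := hx
  have hqAi : p⁻¹ * x ∈ Ai i := (hUi i).2 hqUi
  have hφq : φ i (p⁻¹ * x) ∈ W ∩ A := hUW hqUi
  have hpM : p ∈ Ai i ^ max n 1 :=
    Set.pow_subset_pow_right (hga.one_mem_Ai i) (le_max_left n 1) hp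
  have hqM : p⁻¹ * x ∈ Ai i ^ max n 1 :=
    Set.pow_subset_pow_right (hga.one_mem_Ai i) (le_max_right n 1)
      (by simpa [pow_one] using hqAi)
  have he : (φ i (p * (p⁻¹ * x)))⁻¹ * φ i p * φ i (p⁻¹ * x) ∈ W := hIII p hpM _ hqM
  have hx' : p * (p⁻¹ * x) = x := by group
  rw [hx'] at he
  have heq : (φ i x)⁻¹ * φ i p =
      ((φ i x)⁻¹ * φ i p * φ i (p⁻¹ * x)) * (φ i (p⁻¹ * x))⁻¹ := by group
  rw [heq]
  exact hWV (Set.mul_mem_mul he (by rw [← hWsymm]; exact Set.inv_mem_inv.2 hφq.1))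
end

section
/- Let φ_i : G_i → G be a sequence of good approximations with regular neighborhoods A_i ⊆ G_i and A ⊆ G, and suppose G is equipped with a left-invariant metric inducing its topology. Then for each n ∈ ℕ and each ε > 0, the restriction of φ_i to A_i^n is ε-continuous for all sufficiently large i. -/
open Filter Topology Pointwise

/-- `f` is `ε`-continuous: every point has a neighborhood on which values stay
`ε`-close to the value at the point. -/
def IsEpsCont {X : Type*} [TopologicalSpace X] {Y : Type*} [PseudoMetricSpace Y]
    (ε : ℝ) (f : X → Y) : Prop :=
  ∀ p : X, ∃ U : Set X, IsOpen U ∧ p ∈ U ∧ ∀ x ∈ U, dist (f x) (f p) < ε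

/-- If `G` carries a left-invariant metric (inducing its topology), then
for each `n` and `ε > 0`, the restriction of `φ i` to `(Ai i)^n` is `ε`-continuous
for all sufficiently large `i`. -/
theorem stmt7 {G : Type*} [MetricSpace G] [Group G] [IsTopologicalGroup G]
    [T2Space G] [LocallyCompactSpace G]
    (hinv : ∀ k g h : G, dist (k * g) (k * h) = dist g h)
    {Gi : ℕ → Type*} [∀ i, Group (Gi i)] [∀ i, TopologicalSpace (Gi i)]
    [∀ i, IsTopologicalGroup (Gi i)] [∀ i, T2Space (Gi i)] [∀ i, LocallyCompactSpace (Gi i)]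
    (φ : ∀ i, Gi i → G) (Ai : ∀ i, Set (Gi i)) (A : Set G)
    (hga : IsGoodApprox φ Ai A) :
    ∀ n : ℕ, ∀ ε : ℝ, 0 < ε →
      ∀ᶠ i in atTop,
        IsEpsCont ε (fun x : (Ai i ^ n : Set (Gi i)) => φ i (x : Gi i)) := by
  classical
  intro n ε hε
  have hε2 : 0 < ε / 2 := by linarith
  set Uset : Set G := A ∩ Metric.ball 1 (ε / 2) with hUset
  have hUopen : IsOpen Uset := hga.open_A.inter Metric.isOpen_ball
  have hUsub : Uset ⊆ A := Set.inter_subset_left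
  have h1U : (1 : G) ∈ Uset := ⟨hga.one_mem_A, Metric.mem_ball_self hε2⟩
  obtain ⟨K, hKcomp, hK1, hKU⟩ := exists_compact_subset hUopen h1U
  obtain ⟨Ui, hUi, hUiev⟩ := hga.prop_V K Uset hKU hUsub hKcomp hUopen
  -- φ i 1 → 1
  have hφ1 : Tendsto (fun i => φ i (1 : Gi i)) atTop (𝓝 (1 : G)) := by
    have := hga.prop_III 1 (fun i => (1 : Gi i)) (fun i => (1 : Gi i))
      (fun i => by simpa using hga.one_mem_Ai i)
      (fun i => by simpa using hga.one_mem_Ai i)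
    simpa using this
  have hφ1K : ∀ᶠ i in atTop, φ i (1 : Gi i) ∈ K :=
    hφ1 (Filter.mem_of_superset (isOpen_interior.mem_nhds hK1) interior_subset)
  -- uniform almost-multiplicativity
  have hQ : ∀ᶠ i in atTop, ∀ g ∈ Ai i ^ n, ∀ h ∈ Ai i,
      dist ((φ i (g * h))⁻¹ * φ i g * φ i h) 1 < ε / 2 := by
    by_contra hcon
    rw [Filter.not_eventually] at hcon
    have hch : ∀ i, ∃ g h : Gi i, g ∈ Ai i ^ (n + 1) ∧ h ∈ Ai i ^ (n + 1) ∧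
        (¬ (∀ g ∈ Ai i ^ n, ∀ h ∈ Ai i,
            dist ((φ i (g * h))⁻¹ * φ i g * φ i h) 1 < ε / 2) →
          ε / 2 ≤ dist ((φ i (g * h))⁻¹ * φ i g * φ i h) 1) := by
      intro i
      by_cases hi : ∀ g ∈ Ai i ^ n, ∀ h ∈ Ai i,
          dist ((φ i (g * h))⁻¹ * φ i g * φ i h) 1 < ε / 2
      · exact ⟨1, 1, Set.one_mem_pow (hga.one_mem_Ai i),
          Set.one_mem_pow (hga.one_mem_Ai i), fun hcontra => absurd hi hcontra⟩
      · push_neg at hi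
        obtain ⟨g, hg, h, hh, hd⟩ := hi
        refine ⟨g, h, ?_, ?_, fun _ => hd⟩
        · exact Set.pow_subset_pow_right (hga.one_mem_Ai i) (Nat.le_succ n) hg
        · have : h ∈ Ai i ^ 1 := by simpa using hh
          exact Set.pow_subset_pow_right (hga.one_mem_Ai i)
            (Nat.one_le_iff_ne_zero.2 (Nat.succ_ne_zero n)) this
    choose g h hgmem hhmem hd using hch
    have htend := hga.prop_III (n + 1) g h hgmem hhmem
    have hev : ∀ᶠ i in atTop,
        dist ((φ i (g i * h i))⁻¹ * φ i (g i) * φ i (h i)) 1 < ε / 2 :=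
      Metric.tendsto_nhds.1 htend (ε / 2) hε2
    obtain ⟨i, hi1, hi2⟩ := (hcon.and_eventually hev).exists
    exact absurd hi2 (not_lt.2 (hd i hi1))
  -- combine all eventual facts
  filter_upwards [hUiev, hφ1K, hQ] with i hVi hK1i hQi
  intro p
  have h1Ui : (1 : Gi i) ∈ Ui i := hVi.1 ⟨hK1i, hga.one_mem_Ai i⟩
  refine ⟨{x : (Ai i ^ n : Set (Gi i)) | (p : Gi i)⁻¹ * (x : Gi i) ∈ Ui i}, ?_, ?_, ?_⟩
  · exact ((hUi i).1.preimage (continuous_const.mul continuous_id)).preimage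
      continuous_subtype_val
  · simpa using h1Ui
  · intro x hx
    simp only [Set.mem_setOf_eq] at hx
    set hh : Gi i := (p : Gi i)⁻¹ * (x : Gi i) with hhh
    have hhAi : hh ∈ Ai i := (hUi i).2 hx
    have hxval : (x : Gi i) = (p : Gi i) * hh := by
      rw [hhh, mul_inv_cancel_left]
    have hφh : φ i hh ∈ Uset := hVi.2 hx
    have hφhd : dist (φ i hh) 1 < ε / 2 := by
      have := hφh.2
      simpa [Metric.mem_ball] using this
    have hc := hQi (p : Gi i) p.2 hh hhAi
    set a := φ i ((p : Gi i) * hh)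
    set b := φ i (p : Gi i)
    set c := φ i hh
    have key : dist a b ≤ dist (a⁻¹ * b * c) 1 + dist c 1 := by
      have h1 : dist a (b * c) = dist (a⁻¹ * b * c) 1 := by
        have e1 : dist a (b * c) = dist ((b * c)⁻¹ * a) ((b * c)⁻¹ * (b * c)) :=
          (hinv ((b * c)⁻¹) a (b * c)).symm
        have e2 : dist ((a⁻¹ * b * c)⁻¹) 1 = dist (a⁻¹ * b * c) 1 := by
          have h3 := hinv (a⁻¹ * b * c) ((a⁻¹ * b * c)⁻¹) 1
          rw [mul_inv_cancel, mul_one] at h3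
          rw [← h3]
          exact dist_comm _ _
        rw [e1, inv_mul_cancel, ← e2]
        congr 1
        group
      have h2 : dist (b * c) b = dist c 1 := by
        have := hinv b c 1
        rw [mul_one] at this
        exact this
      calc dist a b ≤ dist a (b * c) + dist (b * c) b := dist_triangle _ _ _
        _ = dist (a⁻¹ * b * c) 1 + dist c 1 := by rw [h1, h2]
    calc dist (φ i (x : Gi i)) (φ i (p : Gi i)) = dist a b := by rw [hxval]
      _ ≤ dist (a⁻¹ * b * c) 1 + dist c 1 := key
      _ < ε / 2 + ε / 2 := add_lt_add hc hφhd
      _ = ε := by ring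
end

section
/- Let X and Y be metric spaces with X compact, let ε > 0, and let f : X → Y be an ε-continuous function. Then there is δ > 0 such that for all x₁, x₂ ∈ X with d(x₁, x₂) < δ, one has d(f(x₁), f(x₂)) < 2ε. -/
/-- An `ε`-continuous function on a compact metric space is uniformly
`2ε`-continuous: there is `δ > 0` such that `d(x₁, x₂) < δ` implies
`d(f x₁, f x₂) < 2ε`. -/
theorem stmt8 {X Y : Type*} [MetricSpace X] [CompactSpace X] [MetricSpace Y]
    (ε : ℝ) (hε : 0 < ε) (f : X → Y) (hf : IsEpsCont ε f) :
    ∃ δ > 0, ∀ x₁ x₂ : X, dist x₁ x₂ < δ → dist (f x₁) (f x₂) < 2 * ε := by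
  choose U hUo hUmem hUd using hf
  have hcov : (Set.univ : Set X) ⊆ ⋃ p, U p := fun x _ =>
    Set.mem_iUnion.2 ⟨x, hUmem x⟩
  obtain ⟨δ, hδ, hball⟩ :=
    lebesgue_number_lemma_of_metric isCompact_univ hUo hcov
  refine ⟨δ, hδ, fun x₁ x₂ hd => ?_⟩
  obtain ⟨p, hp⟩ := hball x₁ (Set.mem_univ _)
  have h1 : x₁ ∈ U p := hp (Metric.mem_ball_self hδ)
  have h2 : x₂ ∈ U p := hp (by simpa [Metric.mem_ball, dist_comm] using hd)
  calc dist (f x₁) (f x₂) ≤ dist (f x₁) (f p) + dist (f x₂) (f p) :=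
        dist_triangle_right _ _ _
    _ < ε + ε := add_lt_add (hUd p x₁ h1) (hUd p x₂ h2)
    _ = 2 * ε := (two_mul ε).symm
end

section
/- Let G be a topological group, B ⊆ G an open symmetric set (e ∈ B and B = B^{-1}), and let c : ℝ → G be a continuous group homomorphism (a one-parameter subgroup; in the paper, c(t) = exp(t·v) for a vector v in the Lie algebra of a Lie group G). Set τ := inf{ t > 0 : c(t) ∉ B } ∈ (0, ∞], and define |c|_B := 1/τ (with the convention 1/∞ = 0). Then |c|_B = limsup_{t → 0} ‖c(t)‖_B / |t|, where ‖·‖_B denotes the escape norm with respect to B. -/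
open Filter Topology
open scoped Classical

/-- The escape norm of `g` with respect to a symmetric set `B`:
`‖g‖_B = inf { 1/(m+1) : g^j ∈ B for all j = 0, 1, …, m }`. -/
noncomputable def escapeNorm {G : Type*} [Group G] (B : Set G) (g : G) : ℝ :=
  sInf {x : ℝ | ∃ m : ℕ, x = 1 / ((m : ℝ) + 1) ∧ ∀ j : ℕ, j ≤ m → g ^ j ∈ B}

section helpers

variable {G : Type*} [Group G] (B : Set G) (g : G)

lemma escapeNorm_nonneg : 0 ≤ escapeNorm B g := by
  apply Real.sInf_nonneg
  rintro x ⟨m, rfl, -⟩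
  positivity

lemma escapeNorm_le (m : ℕ) (h : ∀ j : ℕ, j ≤ m → g ^ j ∈ B) :
    escapeNorm B g ≤ 1 / ((m : ℝ) + 1) := by
  apply csInf_le
  · exact ⟨0, by rintro x ⟨k, rfl, -⟩; positivity⟩
  · exact ⟨m, rfl, h⟩

lemma le_escapeNorm (hB1 : (1 : G) ∈ B) (n : ℕ) (hn : 1 ≤ n) (h : g ^ n ∉ B) :
    1 / (n : ℝ) ≤ escapeNorm B g := by
  apply le_csInf
  · exact ⟨1, 0, by norm_num, by intro j hj; interval_cases j; simpa⟩
  · rintro x ⟨m, rfl, hm⟩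
    have hmn : m + 1 ≤ n := by
      by_contra hcon
      exact h (hm n (by omega))
    apply one_div_le_one_div_of_le
    · positivity
    · exact_mod_cast hmn

lemma escapeNorm_eq_zero (h : ∀ j : ℕ, g ^ j ∈ B) : escapeNorm B g = 0 := by
  refine le_antisymm ?_ (escapeNorm_nonneg B g)
  by_contra hcon
  push_neg at hcon
  obtain ⟨n, hn⟩ := exists_nat_one_div_lt hcon
  exact absurd (escapeNorm_le B g n (fun j _ => h j)) (not_le.mpr hn)

lemma escapeNorm_inv (hBsymm : B⁻¹ = B) : escapeNorm B g⁻¹ = escapeNorm B g := by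
  unfold escapeNorm
  congr 1
  ext x
  constructor <;> rintro ⟨m, rfl, hm⟩ <;> refine ⟨m, rfl, fun j hj => ?_⟩
  · have := hm j hj
    rwa [inv_pow, ← hBsymm, Set.mem_inv, inv_inv] at this
  · rw [inv_pow, ← hBsymm, Set.mem_inv, inv_inv]
    exact hm j hj

end helpers

/-- For a one-parameter subgroup `c : ℝ → G` and an open symmetric set
`B ⊆ G`, setting `τ := inf { t > 0 : c t ∉ B }` and `|c|_B := 1/τ` (interpreted as `0`
when the set is empty, i.e. `τ = ∞`), one has
`|c|_B = limsup_{t → 0} ‖c t‖_B / |t|`. -/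
theorem stmt10 {G : Type*} [Group G] [TopologicalSpace G] [IsTopologicalGroup G]
    (B : Set G) (hB1 : (1 : G) ∈ B) (hBsymm : B⁻¹ = B) (hBopen : IsOpen B)
    (c : ℝ → G) (hc : Continuous c) (hhom : ∀ s t : ℝ, c (s + t) = c s * c t) :
    (if {t : ℝ | 0 < t ∧ c t ∉ B} = ∅ then (0 : ℝ)
      else 1 / sInf {t : ℝ | 0 < t ∧ c t ∉ B}) =
    limsup (fun t : ℝ => escapeNorm B (c t) / |t|) (𝓝[≠] (0 : ℝ)) := by
  have hc0 : c 0 = 1 := by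
    have h := hhom 0 0
    rw [add_zero] at h
    exact (left_eq_mul.mp h)
  have hpow : ∀ (t : ℝ) (n : ℕ), c ((n : ℝ) * t) = (c t) ^ n := by
    intro t n
    induction n with
    | zero => simpa using hc0
    | succ n ih =>
      push_cast
      rw [add_mul, one_mul, hhom, ih, pow_succ]
  have hneg : ∀ t : ℝ, c (-t) = (c t)⁻¹ := by
    intro t
    have h := hhom (-t) t
    rw [neg_add_cancel, hc0] at h
    exact eq_inv_of_mul_eq_one_left h.symm
  -- escape norm is even along c
  have heven : ∀ t : ℝ, escapeNorm B (c |t|) = escapeNorm B (c t) := by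
    intro t
    rcases abs_cases t with ⟨h, _⟩ | ⟨h, _⟩
    · rw [h]
    · rw [h, hneg, escapeNorm_inv B _ hBsymm]
  set T : Set ℝ := {t : ℝ | 0 < t ∧ c t ∉ B} with hT
  set f : ℝ → ℝ := fun t => escapeNorm B (c t) / |t| with hf
  have hfnonneg : ∀ t, 0 ≤ f t := fun t =>
    div_nonneg (escapeNorm_nonneg B (c t)) (abs_nonneg t)
  have hTbdd : BddBelow T := ⟨0, fun x hx => hx.1.le⟩
  by_cases hemp : T = ∅
  · -- all powers in B, f vanishes on punctured neighborhood
    have hfzero : ∀ t : ℝ, t ≠ 0 → f t = 0 := by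
      intro t ht
      have hB : ∀ s : ℝ, 0 ≤ s → c s ∈ B := by
        intro s hs
        rcases eq_or_lt_of_le hs with h | h
        · rw [← h, hc0]; exact hB1
        · by_contra hcon
          exact Set.eq_empty_iff_forall_notMem.mp hemp s ⟨h, hcon⟩
      have : escapeNorm B (c |t|) = 0 := by
        apply escapeNorm_eq_zero
        intro j
        rw [← hpow]
        exact hB _ (by positivity)
      rw [hf]
      simp only
      rw [← heven, this, zero_div]
    rw [if_pos hemp]
    have : limsup f (𝓝[≠] (0 : ℝ)) = limsup (fun _ => (0:ℝ)) (𝓝[≠] (0 : ℝ)) := by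
      apply limsup_congr
      filter_upwards [self_mem_nhdsWithin] with t ht
      exact hfzero t ht
    rw [this, limsup_const]
  · rw [if_neg hemp]
    have hTne : T.Nonempty := Set.nonempty_iff_ne_empty.mpr hemp
    set τ := sInf T with hτ
    -- τ > 0 since B is open and c continuous
    have hτpos : 0 < τ := by
      have hpre : IsOpen (c ⁻¹' B) := hBopen.preimage hc
      have h0 : (0:ℝ) ∈ c ⁻¹' B := by simpa [hc0] using hB1
      obtain ⟨δ, hδpos, hδ⟩ := Metric.isOpen_iff.mp hpre 0 h0
      have : ∀ x ∈ T, δ ≤ x := by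
        intro x hx
        by_contra hcon
        push_neg at hcon
        have : x ∈ c ⁻¹' B := hδ (by
          simp [Real.dist_eq, abs_of_pos hx.1]
          linarith)
        exact hx.2 this
      exact lt_of_lt_of_le hδpos (le_csInf hTne this)
    -- upper bound: f t ≤ 1/τ for t ≠ 0
    have hub : ∀ t : ℝ, t ≠ 0 → f t ≤ 1 / τ := by
      intro t ht
      have hu : 0 < |t| := abs_pos.mpr ht
      set u := |t| with hu'
      set n := ⌈τ / u⌉₊ with hn
      have hn1 : 1 ≤ n := Nat.one_le_iff_ne_zero.mpr (by
        rw [hn, ← Nat.pos_iff_ne_zero, Nat.ceil_pos]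
        positivity)
      have hmem : ∀ j : ℕ, j ≤ n - 1 → (c u) ^ j ∈ B := by
        intro j hj
        have hjn : (j : ℝ) < τ / u := by
          rw [← Nat.lt_ceil]
          omega
        have hju : (j : ℝ) * u < τ := by
          rw [← lt_div_iff₀ hu]
          exact hjn
        rw [← hpow]
        rcases Nat.eq_zero_or_pos j with h | h
        · simp [h, hc0, hB1]
        · have hjpos : (0:ℝ) < (j : ℝ) * u := by positivity
          have := notMem_of_lt_csInf hju hTbdd
          rw [hT, Set.mem_setOf_eq] at this
          push_neg at this
          exact this hjpos
      have h1 : escapeNorm B (c u) ≤ 1 / ((n - 1 : ℕ) + 1 : ℝ) :=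
        escapeNorm_le B (c u) (n - 1) hmem
      have hcast : ((n - 1 : ℕ) + 1 : ℝ) = (n : ℝ) := by
        have : (n - 1) + 1 = n := by omega
        exact_mod_cast congrArg (Nat.cast (R := ℝ)) this
      rw [hcast] at h1
      have hτn : τ ≤ (n : ℝ) * u := by
        have := Nat.le_ceil (τ / u)
        rw [← hn] at this
        calc τ = (τ / u) * u := by field_simp
        _ ≤ (n : ℝ) * u := by nlinarith
      have hnpos : (0:ℝ) < n := by exact_mod_cast hn1
      calc f t = escapeNorm B (c u) / u := by rw [hf]; simp only; rw [← heven t]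
      _ ≤ (1 / (n : ℝ)) / u := by gcongr
      _ = 1 / ((n : ℝ) * u) := by rw [div_div, one_div]
      _ ≤ 1 / τ := by
          apply one_div_le_one_div_of_le hτpos hτn
    have hbdd : IsBoundedUnder (· ≤ ·) (𝓝[≠] (0:ℝ)) f := by
      refine ⟨1 / τ, ?_⟩
      rw [eventually_map]
      filter_upwards [self_mem_nhdsWithin] with t ht
      exact hub t ht
    have hcb : IsCoboundedUnder (· ≤ ·) (𝓝[≠] (0:ℝ)) f := by
      have hb : IsBoundedUnder (· ≥ ·) (𝓝[≠] (0:ℝ)) f :=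
        ⟨0, eventually_map.mpr (Filter.Eventually.of_forall hfnonneg)⟩
      exact hb.isCoboundedUnder_le
    have hub' : limsup f (𝓝[≠] (0:ℝ)) ≤ 1 / τ := by
      apply limsup_le_of_le hcb
      filter_upwards [self_mem_nhdsWithin] with t ht
      exact hub t ht
    -- lower bound
    have hlb : ∀ a : ℝ, a < 1 / τ → a ≤ limsup f (𝓝[≠] (0:ℝ)) := by
      intro a ha
      rcases le_or_gt a 0 with h | h
      · refine le_trans h ?_
        apply le_limsup_of_frequently_le ?_ hbdd
        apply Filter.Frequently.of_forall
        exact hfnonneg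
      · have hτa : τ < 1 / a := by
          rw [lt_div_iff₀ h]
          nlinarith [(lt_div_iff₀ hτpos).mp ha]
        obtain ⟨s, hsT, hs⟩ := (csInf_lt_iff hTbdd hTne).mp hτa
        have hspos : 0 < s := hsT.1
        have has : a < 1 / s := by
          rw [lt_div_iff₀ hspos]
          rw [lt_div_iff₀ h] at hs
          nlinarith
        -- sequence s/(n+1)
        have hkey : ∀ n : ℕ, a ≤ f (s / ((n:ℝ) + 1)) := by
          intro n
          set t := s / ((n:ℝ) + 1) with htd
          have htpos : 0 < t := by positivity
          have hpow' : (c t) ^ (n + 1) = c s := by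
            rw [← hpow]
            congr 1
            rw [htd]
            push_cast
            field_simp
          have h1 : 1 / ((n:ℝ) + 1) ≤ escapeNorm B (c t) := by
            have := le_escapeNorm B (c t) hB1 (n + 1) (by omega)
              (by rw [hpow']; exact hsT.2)
            push_cast at this
            exact this
          have : f t = escapeNorm B (c t) / t := by
            show escapeNorm B (c t) / |t| = _
            rw [abs_of_pos htpos]
          rw [this]
          calc a ≤ 1 / s := has.le
          _ = (1 / ((n:ℝ) + 1)) / t := by rw [htd]; field_simp
          _ ≤ escapeNorm B (c t) / t := by gcongr
        have htend : Tendsto (fun n : ℕ => s / ((n:ℝ) + 1)) atTop (𝓝[≠] (0:ℝ)) := by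
          rw [tendsto_nhdsWithin_iff]
          constructor
          · have h2 : Tendsto (fun n : ℕ => ((n:ℝ) + 1)) atTop atTop :=
              tendsto_atTop_add_const_right atTop 1 tendsto_natCast_atTop_atTop
            exact Tendsto.div_atTop tendsto_const_nhds h2
          · apply Filter.Eventually.of_forall
            intro n
            have : (0:ℝ) < s / ((n:ℝ) + 1) := by positivity
            simp [Set.mem_compl_iff, this.ne']
        apply le_limsup_of_frequently_le ?_ hbdd
        exact htend.frequently (Filter.Frequently.of_forall hkey)
    refine le_antisymm ?_ hub'
    by_contra hcon
    push_neg at hcon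
    obtain ⟨a, ha1, ha2⟩ := exists_between hcon
    exact absurd (hlb a ha2) (not_le.mpr ha1)
end

section
/- Let V be a real vector space, K ≥ 1, and let p : V → ℝ be a function satisfying: p(v) ≥ 0 for all v; p(t·v) = |t|·p(v) for all t ∈ ℝ and v ∈ V; and p(v₁ + … + v_m) ≤ K·(p(v₁) + … + p(v_m)) for all m ∈ ℕ and v₁, …, v_m ∈ V. Then there exists a seminorm N on V with p(v) ≤ N(v) ≤ K·p(v) for all v ∈ V. If moreover p(v) > 0 for every v ≠ 0, then N is a norm. (The seminorm is the Minkowski gauge of the convex hull of D := {v : p(v) ≤ 1}, rescaled; the key inclusions are D ⊆ conv(D) ⊆ K·D.) -/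
/-- A nonnegative, absolutely homogeneous function `p` on a real vector
space which is `K`-quasi-subadditive over arbitrary finite sums (`K ≥ 1`) is, up to a
factor `K`, a seminorm: there is a seminorm `N` with `p ≤ N ≤ K·p`.  If moreover `p`
vanishes only at `0`, then `N` is a norm. -/
theorem stmt12 {V : Type*} [AddCommGroup V] [Module ℝ V] (K : ℝ) (hK : 1 ≤ K)
    (p : V → ℝ)
    (hnonneg : ∀ v : V, 0 ≤ p v)
    (hhomog : ∀ (t : ℝ) (v : V), p (t • v) = |t| * p v)
    (hsub : ∀ (m : ℕ) (v : Fin m → V), p (∑ i, v i) ≤ K * ∑ i, p (v i)) :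
    ∃ N : Seminorm ℝ V,
      (∀ v : V, p v ≤ N v ∧ N v ≤ K * p v) ∧
      ((∀ v : V, v ≠ 0 → 0 < p v) → ∀ v : V, N v = 0 → v = 0) := by
  have hKpos : (0:ℝ) < K := lt_of_lt_of_le one_pos hK
  set S : V → Set ℝ := fun v =>
    {r | ∃ (m : ℕ) (w : Fin m → V), (∑ i, w i) = v ∧ r = ∑ i, p (w i)} with hS
  have hmem : ∀ v : V, p v ∈ S v := fun v =>
    ⟨1, fun _ => v, by simp, by simp⟩
  have hSne : ∀ v : V, (S v).Nonempty := fun v => ⟨p v, hmem v⟩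
  have hlb : ∀ v : V, ∀ r ∈ S v, (0:ℝ) ≤ r := by
    rintro v r ⟨m, w, -, rfl⟩
    exact Finset.sum_nonneg fun i _ => hnonneg _
  have hSbdd : ∀ v : V, BddBelow (S v) := fun v => ⟨0, hlb v⟩
  set q : V → ℝ := fun v => sInf (S v) with hq
  have hq0 : ∀ v : V, 0 ≤ q v := fun v => le_csInf (hSne v) (hlb v)
  have hq_le_p : ∀ v : V, q v ≤ p v := fun v => csInf_le (hSbdd v) (hmem v)
  have hp_le : ∀ v : V, p v ≤ K * q v := by
    intro v
    have h1 : ∀ r ∈ S v, p v / K ≤ r := by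
      rintro r ⟨m, w, hw, rfl⟩
      rw [div_le_iff₀ hKpos, mul_comm]
      exact hw ▸ hsub m w
    have := le_csInf (hSne v) h1
    rw [div_le_iff₀ hKpos, mul_comm] at this
    exact this
  -- subadditivity
  have hmem_add : ∀ {v w : V} {a b : ℝ}, a ∈ S v → b ∈ S w → a + b ∈ S (v + w) := by
    rintro v w a b ⟨m, u, hu, rfl⟩ ⟨n, x, hx, rfl⟩
    exact ⟨m + n, Fin.append u x, by simp [Fin.sum_univ_add, hu, hx],
      by simp [Fin.sum_univ_add]⟩
  have hadd : ∀ v w : V, q (v + w) ≤ q v + q w := by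
    intro v w
    have h1 : ∀ b ∈ S w, q (v + w) - b ≤ q v := by
      intro b hb
      apply le_csInf (hSne v)
      intro a ha
      have := csInf_le (hSbdd (v + w)) (hmem_add ha hb)
      linarith
    have h2 : ∀ b ∈ S w, q (v + w) - q v ≤ b := fun b hb => by
      have := h1 b hb; linarith
    have := le_csInf (hSne w) h2
    linarith
  -- homogeneity
  have hmem_smul : ∀ (t : ℝ) (v : V) (r : ℝ), r ∈ S v → |t| * r ∈ S (t • v) := by
    rintro t v r ⟨m, w, hw, rfl⟩
    exact ⟨m, fun i => t • w i, by rw [← Finset.smul_sum, hw],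
      by simp [hhomog, Finset.mul_sum]⟩
  have hsmul_le : ∀ (t : ℝ), t ≠ 0 → ∀ v : V, q (t • v) ≤ |t| * q v := by
    intro t ht v
    have habs : 0 < |t| := abs_pos.mpr ht
    have h1 : ∀ r ∈ S v, q (t • v) / |t| ≤ r := by
      intro r hr
      rw [div_le_iff₀ habs, mul_comm]
      exact csInf_le (hSbdd _) (hmem_smul t v r hr)
    have := le_csInf (hSne v) h1
    rw [div_le_iff₀ habs, mul_comm] at this
    exact this
  have hq_zero : q 0 = 0 := by
    apply le_antisymm _ (hq0 0)
    exact csInf_le (hSbdd 0) ⟨0, fun i => i.elim0, by simp, by simp⟩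
  have hsmul : ∀ (t : ℝ) (v : V), q (t • v) = |t| * q v := by
    intro t v
    rcases eq_or_ne t 0 with rfl | ht
    · simp [hq_zero]
    · refine le_antisymm (hsmul_le t ht v) ?_
      have habs : 0 < |t| := abs_pos.mpr ht
      have := hsmul_le t⁻¹ (inv_ne_zero ht) (t • v)
      rw [inv_smul_smul₀ ht, abs_inv] at this
      calc |t| * q v ≤ |t| * (|t|⁻¹ * q (t • v)) := by
            exact mul_le_mul_of_nonneg_left this habs.le
        _ = q (t • v) := by field_simp
  refine ⟨Seminorm.of (fun v => K * q v)
      (fun v w => by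
        show K * q (v + w) ≤ K * q v + K * q w
        have := hadd v w
        nlinarith)
      (fun a v => by
        show K * q (a • v) = ‖a‖ * (K * q v)
        rw [hsmul, Real.norm_eq_abs]; ring), ?_, ?_⟩
  · intro v
    refine ⟨hp_le v, ?_⟩
    exact mul_le_mul_of_nonneg_left (hq_le_p v) hKpos.le
  · intro hpos v hNv
    by_contra hv
    have h1 : 0 < p v := hpos v hv
    have h2 : K * q v = 0 := hNv
    have := hp_le v
    nlinarith
end
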